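/- arXiv:2103.00911 — 14 statements merged into one kernel-verified Lean document; each statement's English description precedes it below -/
import Mathlib

section
/- Let a* be a Plurality winner, i.e., an alternative maximizing the number of agents who rank it first. Then the social welfare of a* satisfies SW(a*) ≥ n/m², and consequently SW(b) ≤ m² · SW(a*) for every alternative b ∈ A. -/
/-! Every agent who ranks the Plurality winner `a*` first values it at least `1/m`, being the
largest of `m` values summing to one; by pigeonhole at least `n/m` agents rank `a*` first, so
`SW(a*) ≥ n/m²`. Since every valuation is at most one, `SW(b) ≤ n ≤ m² SW(a*)`. -/

open Finset

lemma le_of_ranked_first {α β : Type*} [LinearOrder β] {v : α → ℝ} (σ : α ≃ β)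
    (hcons : ∀ a b, σ a < σ b → v b ≤ v a) {x : α} (hx : ∀ a, σ x ≤ σ a) (a : α) :
    v a ≤ v x := by
  rcases (hx a).lt_or_eq with h | h
  · exact hcons x a h
  · rw [σ.injective h]

lemma one_div_card_le_of_sum_eq_one {α : Type*} [Fintype α] {f : α → ℝ}
    (hf : ∑ a, f a = 1) {x : α} (hx : ∀ a, f a ≤ f x) : 1 / (Fintype.card α : ℝ) ≤ f x := by
  have hcard : (0 : ℝ) < Fintype.card α := by exact_mod_cast Fintype.card_pos_iff.2 ⟨x⟩
  have hle : (1 : ℝ) ≤ Fintype.card α * f x :=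
    calc (1 : ℝ) = ∑ a, f a := hf.symm
      _ ≤ ∑ _a, f x := sum_le_sum fun a _ => hx a
      _ = Fintype.card α * f x := by simp
  rwa [div_le_iff₀ hcard, mul_comm]

lemma le_one_of_sum_eq_one {α : Type*} [Fintype α] {f : α → ℝ} (hf0 : ∀ a, 0 ≤ f a)
    (hf : ∑ a, f a = 1) (a : α) : f a ≤ 1 :=
  hf ▸ single_le_sum (fun b _ => hf0 b) (mem_univ a)

lemma card_le_card_mul_card_fiber_of_forall_le {ι κ : Type*} [Fintype ι] [Fintype κ]
    [DecidableEq κ] (f : ι → κ) (a : κ) (hmax : ∀ b, #{i | f i = b} ≤ #{i | f i = a}) :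
    Fintype.card ι ≤ Fintype.card κ * #{i | f i = a} :=
  calc Fintype.card ι = ∑ b, #{i | f i = b} :=
        card_eq_sum_card_fiberwise fun i _ => mem_univ (f i)
    _ ≤ Fintype.card κ * #{i | f i = a} := by
        simpa using sum_le_card_nsmul univ _ _ fun b _ => hmax b

theorem plurality_distortion_upper_bound_general
    (n m : ℕ) (hm : 1 ≤ m)
    (v : Fin n → Fin m → ℝ)
    (hv0 : ∀ i a, 0 ≤ v i a)
    (hv1 : ∀ i, ∑ a, v i a = 1)
    (σ : Fin n → (Fin m ≃ Fin m))
    (hcons : ∀ i a b, σ i a < σ i b → v i b ≤ v i a)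
    (astar : Fin m)
    (hplu : ∀ b : Fin m,
      (Finset.univ.filter (fun i : Fin n => (σ i).symm ⟨0, hm⟩ = b)).card ≤
      (Finset.univ.filter (fun i : Fin n => (σ i).symm ⟨0, hm⟩ = astar)).card) :
    (n : ℝ) / (m : ℝ) ^ 2 ≤ ∑ i, v i astar ∧
      ∀ b : Fin m, ∑ i, v i b ≤ (m : ℝ) ^ 2 * ∑ i, v i astar := by
  set T := univ.filter (fun i : Fin n => (σ i).symm ⟨0, hm⟩ = astar)
  have htop : ∀ i ∈ T, 1 / (m : ℝ) ≤ v i astar := fun i hi => by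
    have hfirst : ∀ a, σ i astar ≤ σ i a := fun a => by
      rw [← (mem_filter.1 hi).2, Equiv.apply_symm_apply]
      exact Nat.zero_le _
    simpa using one_div_card_le_of_sum_eq_one (hv1 i) (le_of_ranked_first (σ i) (hcons i) hfirst)
  have hcount : (n : ℝ) ≤ m * #T := by
    exact_mod_cast by simpa using card_le_card_mul_card_fiber_of_forall_le _ astar hplu
  have hlower : (n : ℝ) / m ^ 2 ≤ ∑ i, v i astar :=
    calc (n : ℝ) / m ^ 2 ≤ #T • (1 / (m : ℝ)) := by
          rw [nsmul_eq_mul, div_le_iff₀ (by positivity)]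
          field_simp
          linarith
      _ ≤ ∑ i ∈ T, v i astar := card_nsmul_le_sum T _ _ htop
      _ ≤ ∑ i, v i astar := sum_le_sum_of_subset_of_nonneg (subset_univ T) fun i _ _ => hv0 i astar
  refine ⟨hlower, fun b => ?_⟩
  calc ∑ i, v i b ≤ ∑ _i : Fin n, (1 : ℝ) := sum_le_sum fun i _ => le_one_of_sum_eq_one (hv0 i) (hv1 i) b
    _ = n := by simp
    _ ≤ m ^ 2 * ∑ i, v i astar := (div_le_iff₀' (by positivity)).1 hlower

/-- **Distortion of Plurality, upper bound.**
Normalized single-winner setting: `n ≥ 1` agents, `m ≥ 1` alternatives (`Fin m`),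
unit-sum nonnegative valuations `v`, and rankings `σ` where `σ i a` is the
(0-indexed) position of alternative `a` in agent `i`'s ranking, consistent with `v`.
If `astar` is a Plurality winner (it is ranked first by the most agents), then
`SW(astar) ≥ n / m²`, and consequently `SW(b) ≤ m² ⬝ SW(astar)` for every alternative `b`. -/
theorem plurality_distortion_upper_bound
    (n m : ℕ) (hn : 1 ≤ n) (hm : 1 ≤ m)
    (v : Fin n → Fin m → ℝ)
    (hv0 : ∀ i a, 0 ≤ v i a)
    (hv1 : ∀ i, ∑ a, v i a = 1)
    (σ : Fin n → (Fin m ≃ Fin m))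
    (hcons : ∀ i a b, σ i a < σ i b → v i b ≤ v i a)
    (astar : Fin m)
    (hplu : ∀ b : Fin m,
      (Finset.univ.filter (fun i : Fin n => (σ i).symm ⟨0, hm⟩ = b)).card ≤
      (Finset.univ.filter (fun i : Fin n => (σ i).symm ⟨0, hm⟩ = astar)).card) :
    (n : ℝ) / (m : ℝ) ^ 2 ≤ ∑ i, v i astar ∧
      ∀ b : Fin m, ∑ i, v i b ≤ (m : ℝ) ^ 2 * ∑ i, v i astar :=
  plurality_distortion_upper_bound_general n m hm v hv0 hv1 σ hcons astar hplu
end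

section
/- Fix m ≥ 3 and a set A of m alternatives. For every deterministic voting rule f, which for every number n of agents maps each profile of strict rankings over A to a single alternative of A, there exist a number n of agents, a profile of unit-sum valuations (v_i)_{i∈N} with consistent rankings ≻ = (≻_i)_{i∈N}, and an alternative b ∈ A such that SW(b) ≥ (m(m−2)/4) · SW(f(≻)). In particular, the distortion of every deterministic voting rule is Ω(m²). -/
/-!
Take `n = m - 1` agents, agent `i` ranking alternative `i` first and the last alternative `ℓ`
second. If the rule elects `ℓ`, let every agent put all its value on its top choice: then `ℓ` has
welfare `0`. Otherwise the rule elects the favourite of some agent `j`; let `j` value all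
alternatives equally and every other agent split its value between its top two. The winner then
has welfare `1/m`, while `ℓ` has welfare at least `(m - 2)/2`.
-/

open Finset

noncomputable def topValuation {α : Type*} {m : ℕ} (k : ℕ) (σ : α ≃ Fin m) (a : α) : ℝ :=
  if (σ a : ℕ) < k then (k : ℝ)⁻¹ else 0

section topValuation

variable {α : Type*} {m k : ℕ} (σ : α ≃ Fin m) {a b : α}

theorem topValuation_of_lt (h : (σ a : ℕ) < k) : topValuation k σ a = (k : ℝ)⁻¹ := if_pos h

theorem topValuation_of_le (h : k ≤ (σ a : ℕ)) : topValuation k σ a = 0 := if_neg h.not_gt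

theorem topValuation_nonneg (a : α) : 0 ≤ topValuation k σ a := by
  unfold topValuation; split_ifs <;> positivity

theorem topValuation_le_of_lt (h : σ a < σ b) : topValuation k σ b ≤ topValuation k σ a := by
  by_cases hb : (σ b : ℕ) < k
  · rw [topValuation_of_lt σ hb, topValuation_of_lt σ (lt_trans h hb)]
  · rw [topValuation_of_le σ (not_lt.1 hb)]
    exact topValuation_nonneg σ a

theorem sum_topValuation [Fintype α] (hk : 0 < k) (hkm : k ≤ m) :
    ∑ a, topValuation k σ a = 1 := by
  have hcard : #{p : Fin m | (p : ℕ) < k} = k := by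
    rw [Fin.card_filter_val_lt, min_eq_right hkm]
  unfold topValuation
  rw [Equiv.sum_comp σ (fun p : Fin m => if (p : ℕ) < k then (k : ℝ)⁻¹ else 0), ← sum_filter,
    sum_const, hcard, nsmul_eq_mul]
  exact mul_inv_cancel₀ (by positivity)

theorem topValuation_unitSum_consistent {ι : Type*} [Fintype α] (k : ι → ℕ)
    (σ : ι → α ≃ Fin m) (hk : ∀ i, 0 < k i ∧ k i ≤ m) :
    (∀ i a, 0 ≤ topValuation (k i) (σ i) a) ∧ (∀ i, ∑ a, topValuation (k i) (σ i) a = 1) ∧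
      ∀ i a b, σ i a < σ i b → topValuation (k i) (σ i) b ≤ topValuation (k i) (σ i) a :=
  ⟨fun i => topValuation_nonneg (σ i), fun i => sum_topValuation (σ i) (hk i).1 (hk i).2,
    fun i _ _ => topValuation_le_of_lt (σ i)⟩

end topValuation

theorem Equiv.Perm.exists_apply_eq_and_apply_eq {α : Type*} [DecidableEq α] {a b p q : α}
    (hab : a ≠ b) (hpq : p ≠ q) : ∃ e : Equiv.Perm α, e a = p ∧ e b = q := by
  have hb : swap a p b ≠ p := fun h =>
    hab ((swap a p).injective (h.trans (swap_apply_left a p).symm)).symm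
  refine ⟨(swap a p).trans (swap (swap a p b) q), ?_, ?_⟩
  · simp only [Equiv.trans_apply, swap_apply_left]
    exact swap_apply_of_ne_of_ne hb.symm hpq
  · simp only [Equiv.trans_apply, swap_apply_left]

theorem exists_profile_castSucc_first_last_second {n : ℕ} (hn : 2 ≤ n) :
    ∃ σ : Fin n → Equiv.Perm (Fin (n + 1)),
      ∀ i, (σ i i.castSucc : ℕ) = 0 ∧ (σ i (Fin.last n) : ℕ) = 1 := by
  have hpos : (0 : Fin (n + 1)) ≠ ⟨1, by omega⟩ := by simp [Fin.ext_iff]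
  choose σ hσ using fun i : Fin n =>
    Equiv.Perm.exists_apply_eq_and_apply_eq (Fin.castSucc_lt_last i).ne hpos
  exact ⟨σ, fun i => ⟨by simp [(hσ i).1], by simp [(hσ i).2]⟩⟩

section Profile

variable {n : ℕ} {σ : Fin n → Equiv.Perm (Fin (n + 1))}

theorem two_le_profile_castSucc
    (hσ : ∀ i, (σ i i.castSucc : ℕ) = 0 ∧ (σ i (Fin.last n) : ℕ) = 1) {i j : Fin n}
    (hij : i ≠ j) : 2 ≤ (σ i j.castSucc : ℕ) := by
  have h0 : σ i j.castSucc ≠ σ i i.castSucc :=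
    fun h => hij (Fin.castSucc_injective n ((σ i).injective h)).symm
  have h1 : σ i j.castSucc ≠ σ i (Fin.last n) :=
    fun h => (Fin.castSucc_lt_last j).ne ((σ i).injective h)
  rw [Ne, Fin.ext_iff, (hσ i).1] at h0
  rw [Ne, Fin.ext_iff, (hσ i).2] at h1
  omega

theorem sum_topValuation_profile_castSucc
    (hσ : ∀ i, (σ i i.castSucc : ℕ) = 0 ∧ (σ i (Fin.last n) : ℕ) = 1) (j : Fin n) :
    ∑ i, topValuation (if i = j then n + 1 else 2) (σ i) j.castSucc = ((n + 1 : ℕ) : ℝ)⁻¹ := by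
  rw [sum_eq_single j]
  · rw [if_pos rfl, topValuation_of_lt _ (σ j j.castSucc).isLt]
  · intro i _ hij
    rw [if_neg hij, topValuation_of_le _ (two_le_profile_castSucc hσ hij)]
  · exact fun hj => absurd (mem_univ j) hj

theorem le_sum_topValuation_profile_last
    (hσ : ∀ i, (σ i i.castSucc : ℕ) = 0 ∧ (σ i (Fin.last n) : ℕ) = 1) (j : Fin n) :
    ((n : ℝ) - 1) / 2 ≤ ∑ i, topValuation (if i = j then n + 1 else 2) (σ i) (Fin.last n) := by
  have hhalf : ∀ i ∈ univ.erase j,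
      topValuation (if i = j then n + 1 else 2) (σ i) (Fin.last n) = 2⁻¹ := by
    intro i hi
    rw [if_neg (ne_of_mem_erase hi), topValuation_of_lt _ (by rw [(hσ i).2]; omega)]
    norm_num
  have hj : 1 ≤ n := j.pos
  rw [← add_sum_erase _ _ (mem_univ j), sum_congr rfl hhalf, sum_const,
    card_erase_of_mem (mem_univ j), card_univ, Fintype.card_fin, nsmul_eq_mul, Nat.cast_sub hj]
  push_cast
  rw [div_eq_mul_inv]
  exact le_add_of_nonneg_left (topValuation_nonneg _ _)

end Profile

/-- **Lower bound of `Ω(m²)` on the distortion of every deterministic voting rule.**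
Fix `m ≥ 3` alternatives (`Fin m`). A deterministic voting rule `f` maps, for every
number `n` of agents, each profile of strict rankings (encoded as position functions
`σ i : Fin m ≃ Fin m`, smaller position = more preferred) to a single alternative.
There is an instance (a number `n ≥ 1` of agents, nonnegative unit-sum valuations `v`,
and a consistent profile of rankings `σ`) and an alternative `b` whose social welfare
is at least `(m(m-2)/4)` times the social welfare of the chosen alternative `f n σ`. -/
theorem deterministic_rule_distortion_lower_bound
    (m : ℕ) (hm : 3 ≤ m)
    (f : ∀ n : ℕ, (Fin n → (Fin m ≃ Fin m)) → Fin m) :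
    ∃ n : ℕ, 1 ≤ n ∧
      ∃ (v : Fin n → Fin m → ℝ) (σ : Fin n → (Fin m ≃ Fin m)),
        (∀ i a, 0 ≤ v i a) ∧ (∀ i, ∑ a, v i a = 1) ∧
        (∀ i a b, σ i a < σ i b → v i b ≤ v i a) ∧
        ∃ b : Fin m,
          ((m : ℝ) * ((m : ℝ) - 2) / 4) * ∑ i, v i (f n σ) ≤ ∑ i, v i b := by
  obtain ⟨n, rfl⟩ : ∃ n, m = n + 1 := ⟨m - 1, by omega⟩
  have hn : 2 ≤ n := by omega
  obtain ⟨σ, hσ⟩ := exists_profile_castSucc_first_last_second hn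
  refine ⟨n, by omega, ?_⟩
  by_cases hw : f n σ = Fin.last n
  · obtain ⟨hnonneg, hsum, hcons⟩ :=
      topValuation_unitSum_consistent (fun _ => 1) σ fun _ => ⟨one_pos, by omega⟩
    refine ⟨fun i => topValuation 1 (σ i), σ, hnonneg, hsum, hcons, 0, ?_⟩
    have hzero : ∀ i, topValuation 1 (σ i) (f n σ) = 0 := fun i =>
      topValuation_of_le _ (by rw [hw, (hσ i).2])
    simp only [hzero, sum_const_zero, mul_zero]
    exact sum_nonneg fun i _ => hnonneg i 0
  · obtain ⟨j, hj⟩ := Fin.exists_castSucc_eq.2 hw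
    obtain ⟨hnonneg, hsum, hcons⟩ := topValuation_unitSum_consistent
      (fun i => if i = j then n + 1 else 2) σ fun i => by split_ifs <;> omega
    refine ⟨fun i => topValuation (if i = j then n + 1 else 2) (σ i), σ, hnonneg, hsum, hcons,
      Fin.last n, ?_⟩
    rw [← hj, sum_topValuation_profile_castSucc hσ j]
    have hn' : (2 : ℝ) ≤ n := by exact_mod_cast hn
    calc ((n + 1 : ℕ) : ℝ) * ((n + 1 : ℕ) - 2) / 4 * ((n + 1 : ℕ) : ℝ)⁻¹ = ((n : ℝ) - 1) / 4 := by
          push_cast; field_simp; ring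
      _ ≤ ((n : ℝ) - 1) / 2 := by linarith
      _ ≤ _ := le_sum_topValuation_profile_last hσ j
end

section
/- For every m ≥ 3 and every real number B > 0, there exists an instance of the normalized single-winner setting (a number n of agents, unit-sum valuations, and consistent rankings) that contains an alternative a maximizing the Borda score together with an alternative b such that SW(b) > B · SW(a). Hence the distortion of the Borda rule is unbounded. -/
/-!
Two agents put all their value on their top alternative and both rank alternative `1` second:
the first ranks `0` first, the second ranks `m - 1` first. An alternative ranked second by
everybody is a Borda winner as soon as no alternative is ranked first by a strict majority, so `1`
wins; but its welfare is `0`, while alternative `0` has welfare `1`.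
-/

open Finset

section Borda

variable {n m : ℕ}

def bordaScore (σ : Fin n → Fin m ≃ Fin m) (a : Fin m) : ℕ :=
  ∑ i, (m - 1 - (σ i a : ℕ))

/-- Per agent, `c ≠ a` scores one point more than `a` if it is ranked first and at least one point
less otherwise; the majority condition makes the losses outweigh the gains. -/
theorem bordaScore_le_of_forall_rank_eq_one (σ : Fin n → Fin m ≃ Fin m) {a : Fin m}
    (ha : ∀ i, (σ i a : ℕ) = 1) (hmaj : ∀ c ≠ a, 2 * #{i | (σ i c : ℕ) = 0} ≤ n) (c : Fin m) :
    bordaScore σ c ≤ bordaScore σ a := by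
  rcases eq_or_ne c a with rfl | hca
  · exact le_rfl
  have hagent : ∀ i, m - 1 - (σ i c : ℕ) + 1 ≤
      m - 1 - (σ i a : ℕ) + 2 * if (σ i c : ℕ) = 0 then 1 else 0 := by
    intro i
    have hne : (σ i c : ℕ) ≠ 1 := fun h => hca ((σ i).injective (Fin.ext (h.trans (ha i).symm)))
    have := (σ i c).isLt
    have := (σ i a).isLt
    have := ha i
    split_ifs <;> omega
  have hsum := sum_le_sum fun i (_ : i ∈ univ) => hagent i
  simp only [sum_add_distrib, ← mul_sum, sum_boole, sum_const, card_univ, Fintype.card_fin,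
    smul_eq_mul, mul_one, Nat.cast_id] at hsum
  have := hmaj c hca
  unfold bordaScore
  omega

theorem card_swap_apply_eq_zero_le_one [NeZero m] {top : Fin n → Fin m}
    (htop : Function.Injective top) (c : Fin m) :
    #{i | ((Equiv.swap 0 (top i) c : Fin m) : ℕ) = 0} ≤ 1 := by
  have hfirst : ∀ i, ((Equiv.swap 0 (top i) c : Fin m) : ℕ) = 0 → c = top i := by
    intro i h
    have h0 : Equiv.swap 0 (top i) c = 0 := Fin.ext h
    rwa [Equiv.swap_apply_eq_iff, Equiv.swap_apply_left] at h0
  exact card_le_one.2 fun i hi j hj =>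
    htop ((hfirst i (mem_filter.1 hi).2).symm.trans (hfirst j (mem_filter.1 hj).2))

end Borda

theorem Pi.single_one_le_of_rank_lt {R : Type*} [Zero R] [One R] [Preorder R] [ZeroLEOneClass R]
    {m : ℕ} (τ : Fin m ≃ Fin m) {t g g' : Fin m} (ht : (τ t : ℕ) = 0) (h : τ g < τ g') :
    (Pi.single t (1 : R) : Fin m → R) g' ≤ (Pi.single t 1 : Fin m → R) g := by
  have hg' : g' ≠ t := by
    rintro rfl
    rw [Fin.lt_def, ht] at h
    omega
  rw [Pi.single_eq_of_ne hg']
  exact (Pi.single_nonneg (α := fun _ => R)).2 zero_le_one g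

theorem borda_distortion_unbounded_general
    (m : ℕ) (hm : 3 ≤ m) (B : ℝ) :
    ∃ n : ℕ, 1 ≤ n ∧
      ∃ (v : Fin n → Fin m → ℝ) (σ : Fin n → (Fin m ≃ Fin m)) (a b : Fin m),
        (∀ i g, 0 ≤ v i g) ∧ (∀ i, ∑ g, v i g = 1) ∧
        (∀ i g g', σ i g < σ i g' → v i g' ≤ v i g) ∧
        (∀ a' : Fin m,
          ∑ i, (m - 1 - ((σ i a' : Fin m) : ℕ)) ≤ ∑ i, (m - 1 - ((σ i a : Fin m) : ℕ))) ∧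
        B * ∑ i, v i a < ∑ i, v i b := by
  obtain ⟨k, rfl⟩ := Nat.exists_eq_add_of_le' hm
  let top : Fin 2 → Fin (k + 3) := ![0, Fin.last _]
  have htop : Function.Injective top := by
    intro i j
    fin_cases i <;> fin_cases j <;> simp [top, Fin.ext_iff]
  have hne : ∀ i, top i ≠ 1 := by
    intro i
    fin_cases i <;> simp [top, Fin.ext_iff]
  refine ⟨2, one_le_two, fun i => Pi.single (top i) 1, fun i => Equiv.swap 0 (top i), 1, 0,
    fun i => (Pi.single_nonneg (α := fun _ => ℝ)).2 zero_le_one, fun i => by simp,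
    fun i _ _ => Pi.single_one_le_of_rank_lt _ (by simp),
    bordaScore_le_of_forall_rank_eq_one _ (fun i => ?_) (fun c _ => ?_), ?_⟩
  · rw [Equiv.swap_apply_of_ne_of_ne one_ne_zero (hne i).symm, Fin.val_one]
  · have := card_swap_apply_eq_zero_le_one htop c
    omega
  · simp only [Fin.sum_univ_two, Pi.single_eq_of_ne (hne _).symm]
    simp [top]

/-- **The distortion of the Borda rule is unbounded.**
For every `m ≥ 3` and every bound `B > 0` there is an instance of the normalized
single-winner setting (a number `n ≥ 1` of agents, nonnegative unit-sum valuations `v`,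
and consistent rankings `σ`, where `σ i a` is the 0-indexed position of `a` in agent
`i`'s ranking, so the rank of `a` is `σ i a + 1` and its Borda score is
`∑ i, (m - 1 - σ i a)`) containing a Borda winner `a` and an alternative `b` with
`SW(b) > B ⬝ SW(a)`. -/
theorem borda_distortion_unbounded
    (m : ℕ) (hm : 3 ≤ m) (B : ℝ) (hB : 0 < B) :
    ∃ n : ℕ, 1 ≤ n ∧
      ∃ (v : Fin n → Fin m → ℝ) (σ : Fin n → (Fin m ≃ Fin m)) (a b : Fin m),
        (∀ i g, 0 ≤ v i g) ∧ (∀ i, ∑ g, v i g = 1) ∧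
        (∀ i g g', σ i g < σ i g' → v i g' ≤ v i g) ∧
        (∀ a' : Fin m,
          ∑ i, (m - 1 - ((σ i a' : Fin m) : ℕ)) ≤ ∑ i, (m - 1 - ((σ i a : Fin m) : ℕ))) ∧
        B * ∑ i, v i a < ∑ i, v i b :=
  borda_distortion_unbounded_general m hm B
end

section
/- There exists a constant c > 0 such that for every m ≥ 2 and every randomized voting rule f, which for every number n of agents maps each profile of strict rankings over a set A of m alternatives to a probability distribution over A, there exists an instance (a number n of agents, unit-sum valuations, and consistent rankings ≻) in which max_{b∈A} SW(b) ≥ c·√m · E_{a∼f(≻)}[SW(a)]. In words, the distortion of every randomized voting rule is Ω(√m). -/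
/-!
Put `k = ⌊√m⌋` agents, agent `j` ranking the `j`-th of `k` candidate alternatives first. Whatever
the rule, some candidate `b` gets probability at most `1/k`. Now let the agent ranking `b` first
value only `b`, and every other agent value all alternatives equally at `1/m`; this is consistent
with the rankings. Then `SW(b) ≥ 1`, while every `SW(a)` is at most `[a = b] + k/m`, so the
expected welfare is at most `1/k + k/m ≤ 3/√m`.
-/

open Finset

variable {ι α β : Type*}

theorem exists_apply_le_inv_card_of_injective [Fintype ι] [Fintype α] [Nonempty ι] {p : α → ℝ}
    (hp0 : ∀ a, 0 ≤ p a) (hp1 : ∑ a, p a = 1) {c : ι → α} (hc : Function.Injective c) :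
    ∃ j, p (c j) ≤ (Fintype.card ι : ℝ)⁻¹ := by
  have hle : ∑ j, p (c j) ≤ ∑ _j : ι, (Fintype.card ι : ℝ)⁻¹ := by
    rw [sum_const, card_univ, nsmul_eq_mul, mul_inv_cancel₀ (by positivity), ← hp1]
    calc ∑ j, p (c j) = ∑ a ∈ univ.map ⟨c, hc⟩, p a := (sum_map univ ⟨c, hc⟩ p).symm
      _ ≤ ∑ a, p a := sum_le_univ_sum_of_nonneg hp0
  simpa using exists_le_of_sum_le univ_nonempty hle

theorem sum_mul_le_apply_add [Fintype α] [DecidableEq α] {p w : α → ℝ} (hp0 : ∀ a, 0 ≤ p a)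
    (hp1 : ∑ a, p a = 1) {b : α} {t : ℝ} (hw : ∀ a, w a ≤ (Pi.single b 1 : α → ℝ) a + t) :
    ∑ a, p a * w a ≤ p b + t :=
  calc ∑ a, p a * w a ≤ ∑ a, p a * ((Pi.single b 1 : α → ℝ) a + t) :=
        sum_le_sum fun a _ => mul_le_mul_of_nonneg_left (hw a) (hp0 a)
    _ = p b + t := by simp [mul_add, sum_add_distrib, ← sum_mul, hp1, Pi.single_apply]

def IsConsistent [LT β] (σ : α ≃ β) (v : α → ℝ) : Prop :=
  ∀ a a', σ a < σ a' → v a' ≤ v a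

theorem isConsistent_const [LT β] (σ : α ≃ β) (x : ℝ) : IsConsistent σ fun _ => x :=
  fun _ _ _ => le_rfl

theorem isConsistent_single_of_isMin [DecidableEq α] [Preorder β] {σ : α ≃ β} {b : α}
    (hb : IsMin (σ b)) : IsConsistent σ (Pi.single b 1) := by
  intro a a' h
  obtain rfl | ha' := eq_or_ne a' b
  · exact absurd h hb.not_lt
  · rw [Pi.single_eq_of_ne ha']
    exact (Pi.single_nonneg.2 zero_le_one : 0 ≤ (Pi.single b 1 : α → ℝ)) a

noncomputable section SpikeValuation

variable [DecidableEq ι] [Fintype α] [DecidableEq α]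

def spikeValuation (i₀ : ι) (b : α) : ι → α → ℝ :=
  fun i => if i = i₀ then (Pi.single b 1 : α → ℝ) else fun _ => (Fintype.card α : ℝ)⁻¹

variable (i₀ : ι) (b : α)

theorem spikeValuation_nonneg (i : ι) (a : α) : 0 ≤ spikeValuation i₀ b i a := by
  unfold spikeValuation
  split_ifs
  · exact (Pi.single_nonneg.2 zero_le_one : 0 ≤ (Pi.single b 1 : α → ℝ)) a
  · positivity

theorem sum_spikeValuation (i : ι) : ∑ a, spikeValuation i₀ b i a = 1 := by
  have : (Fintype.card α : ℝ) ≠ 0 := by exact_mod_cast (Fintype.card_pos_iff.mpr ⟨b⟩).ne'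
  unfold spikeValuation
  split_ifs
  · simp
  · simp [this]

theorem isConsistent_spikeValuation [Preorder β] {σ : ι → α ≃ β} (hb : IsMin (σ i₀ b))
    (i : ι) : IsConsistent (σ i) (spikeValuation i₀ b i) := by
  unfold spikeValuation
  split_ifs with hi
  · subst hi
    exact isConsistent_single_of_isMin hb
  · exact isConsistent_const _ _

theorem one_le_sum_spikeValuation [Fintype ι] : 1 ≤ ∑ i, spikeValuation i₀ b i b := by
  simpa [spikeValuation] using
    single_le_sum (fun i _ => spikeValuation_nonneg i₀ b i b) (mem_univ i₀)

theorem sum_spikeValuation_le [Fintype ι] (a : α) :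
    ∑ i, spikeValuation i₀ b i a
      ≤ (Pi.single b 1 : α → ℝ) a + Fintype.card ι / Fintype.card α := by
  have hterm : ∀ i, spikeValuation i₀ b i a
      ≤ (if i = i₀ then (Pi.single b 1 : α → ℝ) a else 0) + (Fintype.card α : ℝ)⁻¹ := by
    intro i
    unfold spikeValuation
    split_ifs <;> simp
  calc ∑ i, spikeValuation i₀ b i a
      ≤ ∑ i, ((if i = i₀ then (Pi.single b 1 : α → ℝ) a else 0) + (Fintype.card α : ℝ)⁻¹) :=
        sum_le_sum fun i _ => hterm i
    _ = (Pi.single b 1 : α → ℝ) a + Fintype.card ι / Fintype.card α := by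
        simp [sum_add_distrib, div_eq_mul_inv]

end SpikeValuation

theorem sqrt_mul_inv_natSqrt_add_natSqrt_div_le {m : ℕ} (hm : 1 ≤ m) :
    √(m : ℝ) * ((Nat.sqrt m : ℝ)⁻¹ + Nat.sqrt m / m) ≤ 3 := by
  have hk : (1 : ℝ) ≤ Nat.sqrt m := by exact_mod_cast Nat.sqrt_pos.mpr hm
  have hsq : √(m : ℝ) ^ 2 = m := Real.sq_sqrt (Nat.cast_nonneg m)
  have hks : (Nat.sqrt m : ℝ) ≤ √(m : ℝ) := Real.nat_sqrt_le_real_sqrt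
  have hsk : √(m : ℝ) < Nat.sqrt m + 1 := Real.real_sqrt_lt_nat_sqrt_succ
  have hinv : √(m : ℝ) * (Nat.sqrt m : ℝ)⁻¹ ≤ 2 := by
    rw [mul_inv_le_iff₀ (by positivity)]
    linarith
  have hdiv : √(m : ℝ) * (Nat.sqrt m / m) ≤ 1 := by
    rw [mul_div_assoc', div_le_one (by positivity)]
    nlinarith
  linarith [mul_add √(m : ℝ) (Nat.sqrt m : ℝ)⁻¹ (Nat.sqrt m / m)]

/-- **Lower bound of `Ω(√m)` on the distortion of every randomized voting rule.**
There is a constant `c > 0` such that for every `m ≥ 2` and every randomized voting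
rule `f` (which, for every number `n` of agents, maps each profile of strict rankings
`σ` to a probability distribution `f n σ` over the `m` alternatives), there is an
instance (a number `n ≥ 1` of agents, nonnegative unit-sum valuations `v`,
and a consistent profile `σ`) in which the maximum social welfare, witnessed by some
alternative `b`, is at least `c⬝√m` times the expected social welfare
`∑ a, f n σ a * SW(a)` of the rule. -/
theorem randomized_rule_distortion_lower_bound :
    ∃ c : ℝ, 0 < c ∧
      ∀ (m : ℕ), 2 ≤ m →
      ∀ f : ∀ n : ℕ, (Fin n → (Fin m ≃ Fin m)) → (Fin m → ℝ),
        (∀ n σ a, 0 ≤ f n σ a) →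
        (∀ n σ, ∑ a, f n σ a = 1) →
        ∃ n : ℕ, 1 ≤ n ∧
          ∃ (v : Fin n → Fin m → ℝ) (σ : Fin n → (Fin m ≃ Fin m)),
            (∀ i a, 0 ≤ v i a) ∧ (∀ i, ∑ a, v i a = 1) ∧
            (∀ i a b, σ i a < σ i b → v i b ≤ v i a) ∧
            ∃ b : Fin m,
              c * Real.sqrt m * (∑ a, f n σ a * ∑ i, v i a) ≤ ∑ i, v i b := by
  refine ⟨1 / 3, by norm_num, fun m hm f hf0 hf1 => ?_⟩
  set k := Nat.sqrt m
  have hk : 0 < k := Nat.sqrt_pos.mpr (by omega)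
  have hkm : k ≤ m := Nat.sqrt_le_self m
  have : Nonempty (Fin k) := ⟨⟨0, hk⟩⟩
  let top : Fin m := ⟨0, by omega⟩
  let σ : Fin k → Fin m ≃ Fin m := fun j => Equiv.swap top (Fin.castLE hkm j)
  obtain ⟨j₀, hj₀⟩ :=
    exists_apply_le_inv_card_of_injective (hf0 k σ) (hf1 k σ) (Fin.castLE_injective hkm)
  set b := Fin.castLE hkm j₀
  have hb : IsMin (σ j₀ b) := by simp [σ, top, b, isMin_iff_forall_not_lt, Fin.lt_def]
  refine ⟨k, hk, spikeValuation j₀ b, σ, spikeValuation_nonneg j₀ b,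
    sum_spikeValuation j₀ b, isConsistent_spikeValuation j₀ b hb, b, ?_⟩
  have hE := sum_mul_le_apply_add (hf0 k σ) (hf1 k σ) (sum_spikeValuation_le j₀ b)
  simp only [Fintype.card_fin] at hj₀ hE
  calc 1 / 3 * √(m : ℝ) * ∑ a, f k σ a * ∑ i, spikeValuation j₀ b i a
      ≤ 1 / 3 * √(m : ℝ) * ((k : ℝ)⁻¹ + k / m) := by gcongr; linarith
    _ ≤ 1 := by linarith [sqrt_mul_inv_natSqrt_add_natSqrt_div_le (m := m) (by omega)]
    _ ≤ ∑ i, spikeValuation j₀ b i b := one_le_sum_spikeValuation j₀ b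
end

section
/- Consider the randomized voting rule that, given a profile of strict rankings, selects alternative a with probability P(a) = 1/(2m) + hs(a)/(2·Σ_{a'∈A} hs(a')), where hs(a) = Σ_{i∈N} 1/rank_i(a) is the harmonic score of a. There exists a constant c > 0 such that for every m ≥ 2 and every instance with unit-sum valuations and consistent rankings, max_{b∈A} SW(b) ≤ c·√(m·log m) · Σ_{a∈A} P(a)·SW(a). That is, this rule has distortion O(√(m log m)). -/
/-!
A voter's value for her `k`-th ranked alternative is at most `1/k`, since the `k` alternatives
above it are worth at least as much and the total is `1`. Hence `SW(a) ≤ hs(a)`, and the half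
of the rule driven by harmonic scores already earns `SW(b)² / (2 n H_m)`, while the uniform
half earns `n / (2m)`. By AM–GM, `√(m H_m)` times the sum of these two terms dominates
`SW(b)`, and `H_m = O(log m)`.
-/

open Finset Real

lemma rank_mul_le_sum_of_antitone {α : Type*} [Fintype α] {m : ℕ} (e : α ≃ Fin m)
    {v : α → ℝ} (hv : ∀ x, 0 ≤ v x) (hcons : ∀ x y, e x < e y → v y ≤ v x) (x : α) :
    (((e x : ℕ) : ℝ) + 1) * v x ≤ ∑ y, v y := by
  set above := (Iic (e x)).map e.symm.toEmbedding
  have hcard : (#above : ℝ) = ((e x : ℕ) : ℝ) + 1 := by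
    simp [above, Fin.card_Iic]
  have hle : ∀ y ∈ above, v x ≤ v y := by
    simp only [above, mem_map, mem_Iic, Equiv.coe_toEmbedding]
    rintro _ ⟨k, hk, rfl⟩
    rcases hk.lt_or_eq with hlt | rfl
    · exact hcons _ _ (by simpa using hlt)
    · simp
  calc (((e x : ℕ) : ℝ) + 1) * v x = #above • v x := by rw [nsmul_eq_mul, hcard]
    _ ≤ ∑ y ∈ above, v y := card_nsmul_le_sum _ _ _ hle
    _ ≤ ∑ y, v y := sum_le_univ_sum_of_nonneg hv

lemma sum_inv_rank_eq_harmonic {α : Type*} [Fintype α] {m : ℕ} (e : α ≃ Fin m) :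
    ∑ x, 1 / (((e x : ℕ) : ℝ) + 1) = harmonic m := by
  rw [e.sum_comp (fun k : Fin m => 1 / (((k : ℕ) : ℝ) + 1)),
    Fin.sum_univ_eq_sum_range (fun k => 1 / ((k : ℝ) + 1))]
  simp [harmonic, one_div]

lemma harmonic_le_four_mul_log {m : ℕ} (hm : 2 ≤ m) : (harmonic m : ℝ) ≤ 4 * log m := by
  have hlog2 : log 2 ≤ log m := log_le_log two_pos (by exact_mod_cast hm)
  linarith [harmonic_le_one_add_log m, log_two_gt_d9]

/-- AM–GM, after substituting `H = s² / m`. -/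
lemma le_mul_div_add_sq_div_of_sq_eq {m n H s : ℝ} (hm : 0 < m) (hn : 0 < n) (hs : 0 < s)
    (hsq : s ^ 2 = m * H) (x : ℝ) : x ≤ s * (n / (2 * m) + x ^ 2 / (2 * (n * H))) := by
  have hH : H = s ^ 2 / m := by field_simp; linarith
  rw [← sub_nonneg]
  have key : s * (n / (2 * m) + x ^ 2 / (2 * (n * H))) - x
      = (n * s - m * x) ^ 2 / (2 * m * n * s) := by
    rw [hH]
    field_simp
    ring
  rw [key]
  positivity

namespace HarmonicRule

variable {n m : ℕ}

noncomputable def socialWelfare (v : Fin n → Fin m → ℝ) (a : Fin m) : ℝ := ∑ i, v i a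

noncomputable def harmonicScore (σ : Fin n → Fin m ≃ Fin m) (a : Fin m) : ℝ :=
  ∑ i, (1 : ℝ) / (((σ i a : Fin m) : ℕ) + 1)

noncomputable def prob (σ : Fin n → Fin m ≃ Fin m) (a : Fin m) : ℝ :=
  1 / (2 * (m : ℝ)) + harmonicScore σ a / (2 * ∑ a', harmonicScore σ a')

lemma harmonicScore_nonneg (σ : Fin n → Fin m ≃ Fin m) (a : Fin m) :
    0 ≤ harmonicScore σ a :=
  sum_nonneg fun _ _ => by positivity

lemma sum_harmonicScore (σ : Fin n → Fin m ≃ Fin m) :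
    ∑ a, harmonicScore σ a = n * harmonic m := by
  simp only [harmonicScore]
  rw [sum_comm]
  simp only [sum_inv_rank_eq_harmonic, sum_const, card_univ, Fintype.card_fin, nsmul_eq_mul]

variable {v : Fin n → Fin m → ℝ}

lemma socialWelfare_nonneg (hv : ∀ i a, 0 ≤ v i a) (a : Fin m) : 0 ≤ socialWelfare v a :=
  sum_nonneg fun i _ => hv i a

lemma sum_socialWelfare (hsum : ∀ i, ∑ a, v i a = 1) : ∑ a, socialWelfare v a = n := by
  simp only [socialWelfare]
  rw [sum_comm]
  simp [hsum]

lemma socialWelfare_le_harmonicScore {σ : Fin n → Fin m ≃ Fin m} (hv : ∀ i a, 0 ≤ v i a)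
    (hsum : ∀ i, ∑ a, v i a = 1) (hcons : ∀ i a b, σ i a < σ i b → v i b ≤ v i a)
    (a : Fin m) : socialWelfare v a ≤ harmonicScore σ a := by
  refine sum_le_sum fun i _ => ?_
  have := rank_mul_le_sum_of_antitone (σ i) (hv i) (hcons i) a
  rw [hsum i] at this
  rwa [le_div_iff₀ (by positivity), mul_comm]

lemma sq_socialWelfare_le_sum_harmonicScore_mul {σ : Fin n → Fin m ≃ Fin m}
    (hv : ∀ i a, 0 ≤ v i a) (hsum : ∀ i, ∑ a, v i a = 1)
    (hcons : ∀ i a b, σ i a < σ i b → v i b ≤ v i a)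
    (b : Fin m) :
    socialWelfare v b ^ 2 ≤ ∑ a, harmonicScore σ a * socialWelfare v a :=
  calc socialWelfare v b ^ 2 ≤ harmonicScore σ b * socialWelfare v b := by
        rw [sq]
        exact mul_le_mul_of_nonneg_right
          (socialWelfare_le_harmonicScore hv hsum hcons b) (socialWelfare_nonneg hv b)
    _ ≤ ∑ a, harmonicScore σ a * socialWelfare v a :=
        single_le_sum (fun a _ => mul_nonneg (harmonicScore_nonneg σ a)
          (socialWelfare_nonneg hv a)) (mem_univ b)

lemma sum_prob_mul_socialWelfare_eq (σ : Fin n → Fin m ≃ Fin m)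
    (hsum : ∀ i, ∑ a, v i a = 1) :
    ∑ a, prob σ a * socialWelfare v a
      = n / (2 * m) + (∑ a, harmonicScore σ a * socialWelfare v a) / (2 * (n * harmonic m)) := by
  simp only [prob, sum_harmonicScore, add_mul, sum_add_distrib, ← mul_sum, div_mul_eq_mul_div,
    ← sum_div, sum_socialWelfare hsum]
  ring

lemma add_sq_div_le_sum_prob_mul_socialWelfare {σ : Fin n → Fin m ≃ Fin m} (hm : 1 ≤ m)
    (hv : ∀ i a, 0 ≤ v i a) (hsum : ∀ i, ∑ a, v i a = 1)
    (hcons : ∀ i a b, σ i a < σ i b → v i b ≤ v i a) (b : Fin m) :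
    n / (2 * m) + socialWelfare v b ^ 2 / (2 * (n * harmonic m))
      ≤ ∑ a, prob σ a * socialWelfare v a := by
  have : (0 : ℝ) < harmonic m := by exact_mod_cast harmonic_pos (by omega)
  rw [sum_prob_mul_socialWelfare_eq σ hsum]
  gcongr
  exact sq_socialWelfare_le_sum_harmonicScore_mul hv hsum hcons b

end HarmonicRule

open HarmonicRule in
/-- **The harmonic-score rule of Boutilier et al. has distortion `O(√(m log m))`.**
The randomized rule selects alternative `a` with probability
`1/(2m) + hs(a) / (2 ∑_{a'} hs(a'))`, where `hs(a) = ∑ i, 1/rank_i(a)` is the harmonic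
score of `a` (with `rank_i(a) = σ i a + 1`, `σ i a` being the 0-indexed position of `a`
in agent `i`'s ranking). There is a constant `c > 0` such that, in every instance with
`m ≥ 2` alternatives, `n ≥ 1` agents, nonnegative unit-sum valuations, and consistent
rankings, the maximum social welfare is at most `c⬝√(m log m)` times the expected
social welfare of this rule. -/
theorem harmonic_rule_distortion_upper_bound :
    ∃ c : ℝ, 0 < c ∧
      ∀ (m n : ℕ), 2 ≤ m → 1 ≤ n →
      ∀ (v : Fin n → Fin m → ℝ) (σ : Fin n → (Fin m ≃ Fin m)),
        (∀ i a, 0 ≤ v i a) →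
        (∀ i, ∑ a, v i a = 1) →
        (∀ i a b, σ i a < σ i b → v i b ≤ v i a) →
        ∀ b : Fin m,
          ∑ i, v i b ≤
            c * Real.sqrt ((m : ℝ) * Real.log m) *
              ∑ a, (1 / (2 * (m : ℝ)) +
                  (∑ i, (1 : ℝ) / (((σ i a : Fin m) : ℕ) + 1)) /
                    (2 * ∑ a', ∑ i, (1 : ℝ) / (((σ i a' : Fin m) : ℕ) + 1))) *
                (∑ i, v i a) := by
  refine ⟨2, two_pos, fun m n hm hn v σ hv hsum hcons b => ?_⟩
  change socialWelfare v b ≤ 2 * √(m * log m) * ∑ a, prob σ a * socialWelfare v a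
  have hH : (0 : ℝ) < harmonic m := by exact_mod_cast harmonic_pos (by omega)
  have hE := add_sq_div_le_sum_prob_mul_socialWelfare (by omega) hv hsum hcons b
  have hsqrt : √(m * harmonic m) ≤ 2 * √(m * log m) :=
    calc √(m * harmonic m) ≤ √(m * (4 * log m)) := by grw [harmonic_le_four_mul_log hm]
      _ = 2 * √(m * log m) := by
          rw [mul_left_comm, show (4 : ℝ) = 2 ^ 2 by norm_num, sqrt_mul (by positivity),
            sqrt_sq zero_le_two]
  calc socialWelfare v b
      ≤ √(m * harmonic m) * (n / (2 * m) + socialWelfare v b ^ 2 / (2 * (n * harmonic m))) :=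
        le_mul_div_add_sq_div_of_sq_eq (by positivity) (by positivity) (by positivity)
          (sq_sqrt (by positivity)) _
    _ ≤ √(m * harmonic m) * ∑ a, prob σ a * socialWelfare v a := by gcongr
    _ ≤ 2 * √(m * log m) * ∑ a, prob σ a * socialWelfare v a :=
        mul_le_mul_of_nonneg_right hsqrt (le_trans (by positivity) hE)
end

section
/- Let (X, d) be a pseudometric space, let (x_i)_{i∈N} be the locations of n agents in X, and let a, b ∈ X be two alternatives. If at least half of the agents weakly prefer a to b, i.e., |{i ∈ N : d(x_i, a) ≤ d(x_i, b)}| ≥ n/2, then the social costs satisfy SC(a) ≤ 3 · SC(b). -/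
/-!
Agents weakly preferring `a` have `d(a, b) ≤ d(xᵢ, a) + d(xᵢ, b) ≤ 2 d(xᵢ, b)`, while every other
agent pays at most `d(xᵢ, b) + d(a, b)` for `a`. Since the supporters of `a` are at least as many
as the others, the extra `d(a, b)` of each other agent is paid for by a distinct supporter, at a
price of at most `2 d(xᵢ, b)`.
-/

open Finset

section

variable {X ι : Type*} [PseudoMetricSpace X] (x : ι → X) (a b : X)

lemma dist_le_two_mul_dist_of_dist_le {p : X} (h : dist p a ≤ dist p b) :
    dist a b ≤ 2 * dist p b := by
  linarith [dist_triangle_left a b p]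

lemma card_mul_dist_le_two_mul_sum_dist (s : Finset ι)
    (hs : ∀ i ∈ s, dist (x i) a ≤ dist (x i) b) :
    #s * dist a b ≤ 2 * ∑ i ∈ s, dist (x i) b := by
  rw [mul_sum, ← nsmul_eq_mul, ← sum_const]
  exact sum_le_sum fun i hi => dist_le_two_mul_dist_of_dist_le a b (hs i hi)

lemma sum_dist_le_sum_dist_add_card_mul (s : Finset ι) :
    ∑ i ∈ s, dist (x i) a ≤ ∑ i ∈ s, dist (x i) b + #s * dist a b := by
  rw [← nsmul_eq_mul, ← sum_const, ← sum_add_distrib]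
  exact sum_le_sum fun i _ => dist_triangle_right (x i) a b

theorem sum_dist_le_three_mul_sum_dist [Fintype ι] [DecidableEq ι] (s : Finset ι)
    (hs : ∀ i ∈ s, dist (x i) a ≤ dist (x i) b) (hcard : #sᶜ ≤ #s) :
    ∑ i, dist (x i) a ≤ 3 * ∑ i, dist (x i) b := by
  have h_in : ∑ i ∈ s, dist (x i) a ≤ ∑ i ∈ s, dist (x i) b := sum_le_sum hs
  have h_out := sum_dist_le_sum_dist_add_card_mul x a b sᶜ
  have h_cost : (#sᶜ : ℝ) * dist a b ≤ #s * dist a b := by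
    gcongr
  have h_pay := card_mul_dist_le_two_mul_sum_dist x a b s hs
  have h_nonneg : 0 ≤ ∑ i ∈ sᶜ, dist (x i) b := sum_nonneg fun _ _ => dist_nonneg
  rw [← sum_add_sum_compl s, ← sum_add_sum_compl s (fun i => dist (x i) b)]
  linarith

end

theorem majority_implies_social_cost_factor_three_general
    {X : Type*} [PseudoMetricSpace X] (n : ℕ)
    (x : Fin n → X) (a b : X)
    (hmaj : (n : ℝ) / 2 ≤
      ((Finset.univ.filter (fun i : Fin n => dist (x i) a ≤ dist (x i) b)).card : ℝ)) :
    ∑ i, dist (x i) a ≤ 3 * ∑ i, dist (x i) b := by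
  set S := univ.filter fun i : Fin n => dist (x i) a ≤ dist (x i) b
  have h_split : (#S : ℝ) + #Sᶜ = n := by
    exact_mod_cast (card_add_card_compl S).trans (Fintype.card_fin n)
  refine sum_dist_le_three_mul_sum_dist x a b S (fun i hi => (mem_filter.mp hi).2) ?_
  exact_mod_cast (by linarith : (#Sᶜ : ℝ) ≤ #S)

/-- **Majority support implies social cost within a factor 3.**
In a pseudometric space, if at least half of the `n` agents (located at `x i`) weakly
prefer alternative `a` to alternative `b` (i.e. are at distance from `a` no larger than
from `b`), then `SC(a) ≤ 3 ⬝ SC(b)`, where `SC(y) = ∑ i, dist (x i) y`. -/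
theorem majority_implies_social_cost_factor_three
    {X : Type*} [PseudoMetricSpace X] (n : ℕ) (hn : 1 ≤ n)
    (x : Fin n → X) (a b : X)
    (hmaj : (n : ℝ) / 2 ≤
      ((Finset.univ.filter (fun i : Fin n => dist (x i) a ≤ dist (x i) b)).card : ℝ)) :
    ∑ i, dist (x i) a ≤ 3 * ∑ i, dist (x i) b :=
  majority_implies_social_cost_factor_three_general n x a b hmaj
end

section
/- Let (X, d) be a pseudometric space, let (x_i)_{i∈N} be the locations of n agents in X, and let a, c, b ∈ X be three alternatives. If at least half of the agents weakly prefer a to c (|{i : d(x_i, a) ≤ d(x_i, c)}| ≥ n/2) and at least half of the agents weakly prefer c to b (|{i : d(x_i, c) ≤ d(x_i, b)}| ≥ n/2), then SC(a) ≤ 5 · SC(b). -/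
/-!
Let `S₁` be the agents weakly preferring `a` to `c` and `S₂` those weakly preferring `c` to `b`.
Agents in `S₁ ∩ S₂` are at least as close to `a` as to `b`, agents in `S₁ \ S₂` are at most
`d(c, b)` farther from `a` than from `b`, and everyone is at most `d(a, b)` farther; hence
`SC(a) ≤ SC(b) + |S₁ \ S₂| d(c, b) + |S₁ᶜ| d(a, b)`. The triangle inequality gives, agent by agent,
`d(c, b) ≤ 2 d(xᵢ, b)` on `S₂`, `d(a, b) ≤ 2 d(xᵢ, b)` on `S₁ ∩ S₂` and
`d(a, b) ≤ d(c, b) + 2 d(xᵢ, b)` on `S₁ \ S₂`; since both majorities have at least `n / 2`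
members, these lower bounds pay for the excess `|S₁ \ S₂| d(c, b) + |S₁ᶜ| d(a, b)` using every
agent's `d(xᵢ, b)` at most four times.
-/

open Finset

lemma dist_le_two_mul_of_dist_le {X : Type*} [PseudoMetricSpace X] {p a b : X}
    (h : dist p a ≤ dist p b) : dist a b ≤ 2 * dist p b := by
  linarith [dist_triangle_left a b p]

/-- Read `g, p, q, k` as the sizes of `S₁ ∩ S₂`, `S₁ \ S₂`, `S₂ \ S₁`, `S₁ᶜ`, `X, Y, W` as the sums
of `d(xᵢ, b)` over `S₁ ∩ S₂`, `S₁ \ S₂`, `S₁ᶜ`, and `u = d(a, b)`, `t = d(c, b)`. -/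
lemma excess_le_of_counts {g p q k u t X Y W : ℝ} (hk₀ : 0 ≤ k) (hu : 0 ≤ u) (ht : 0 ≤ t)
    (hX₀ : 0 ≤ X) (hY₀ : 0 ≤ Y) (hXu : g * u ≤ 2 * X) (hXt : g * t ≤ 2 * X)
    (hY : p * u ≤ p * t + 2 * Y) (hW : q * t ≤ 2 * W) (hk : k ≤ g + p)
    (hpk : p + k ≤ g + 2 * q) :
    p * t + k * u ≤ 4 * (X + Y + W) := by
  have hpkt := mul_le_mul_of_nonneg_right hpk ht
  rcases le_or_gt k g with hkg | hgk
  · linarith [mul_le_mul_of_nonneg_right hkg hu, mul_nonneg hk₀ ht]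
  · -- the `k - g` agents outside `S₁` not matched with `S₁ ∩ S₂` are charged to `S₁ \ S₂`
    have hmatch : (k - g) * (u - t) ≤ 2 * Y := by
      rcases le_or_gt u t with hut | htu
      · linarith [mul_nonpos_of_nonneg_of_nonpos (sub_nonneg.2 hgk.le) (sub_nonpos.2 hut)]
      · linarith [mul_le_mul_of_nonneg_right (show k - g ≤ p by linarith) (sub_nonneg.2 htu.le)]
    linarith

section SocialCost

variable {X ι : Type*} [PseudoMetricSpace X]

lemma card_mul_le_two_mul_sum_dist {x : ι → X} {b : X} {s : Finset ι} {r : ℝ}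
    (h : ∀ i ∈ s, r ≤ 2 * dist (x i) b) : #s * r ≤ 2 * ∑ i ∈ s, dist (x i) b := by
  simpa [mul_sum] using card_nsmul_le_sum s _ r h

variable [Fintype ι]

def socialCost (x : ι → X) (y : X) : ℝ := ∑ i, dist (x i) y

noncomputable def weakSupporters (x : ι → X) (a c : X) : Finset ι :=
  univ.filter fun i => dist (x i) a ≤ dist (x i) c

lemma mem_weakSupporters {x : ι → X} {a c : X} {i : ι} :
    i ∈ weakSupporters x a c ↔ dist (x i) a ≤ dist (x i) c := by
  simp [weakSupporters]

lemma sum_eq_sum_inter_add_sum_sdiff_add_sum_compl [DecidableEq ι] {M : Type*} [AddCommMonoid M]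
    (s t : Finset ι) (f : ι → M) :
    ∑ i, f i = ∑ i ∈ s ∩ t, f i + ∑ i ∈ s \ t, f i + ∑ i ∈ sᶜ, f i := by
  rw [sum_inter_add_sum_sdiff, sum_add_sum_compl]

lemma socialCost_le_add_excess [DecidableEq ι] (x : ι → X) (a c b : X) :
    socialCost x a ≤ socialCost x b
      + #(weakSupporters x a c \ weakSupporters x c b) * dist c b
      + #(weakSupporters x a c)ᶜ * dist a b := by
  set s := weakSupporters x a c
  set s' := weakSupporters x c b
  have hboth : ∀ i ∈ s ∩ s', dist (x i) a ≤ dist (x i) b := fun i hi => by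
    rw [mem_inter, mem_weakSupporters, mem_weakSupporters] at hi
    exact hi.1.trans hi.2
  have hfirst : ∀ i ∈ s \ s', dist (x i) a ≤ dist (x i) b + dist c b := fun i hi => by
    rw [mem_sdiff, mem_weakSupporters] at hi
    exact hi.1.trans (dist_triangle_right _ _ _)
  have hany : ∀ i ∈ sᶜ, dist (x i) a ≤ dist (x i) b + dist a b :=
    fun i _ => dist_triangle_right _ _ _
  have hsum := add_le_add (add_le_add (sum_le_sum hboth) (sum_le_sum hfirst)) (sum_le_sum hany)
  simp only [sum_add_distrib, sum_const, nsmul_eq_mul,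
    ← sum_eq_sum_inter_add_sum_sdiff_add_sum_compl] at hsum
  unfold socialCost
  rw [sum_eq_sum_inter_add_sum_sdiff_add_sum_compl s s' fun i => dist (x i) b]
  linarith

theorem socialCost_le_five_mul_of_two_majority_steps [DecidableEq ι] {x : ι → X} {a c b : X}
    (h₁ : (Fintype.card ι : ℝ) / 2 ≤ #(weakSupporters x a c))
    (h₂ : (Fintype.card ι : ℝ) / 2 ≤ #(weakSupporters x c b)) :
    socialCost x a ≤ 5 * socialCost x b := by
  set s := weakSupporters x a c
  set s' := weakSupporters x c b
  have hXu : (#(s ∩ s') : ℝ) * dist a b ≤ 2 * ∑ i ∈ s ∩ s', dist (x i) b :=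
    card_mul_le_two_mul_sum_dist fun i hi => by
      rw [mem_inter, mem_weakSupporters, mem_weakSupporters] at hi
      exact dist_le_two_mul_of_dist_le (hi.1.trans hi.2)
  have hXt : (#(s ∩ s') : ℝ) * dist c b ≤ 2 * ∑ i ∈ s ∩ s', dist (x i) b :=
    card_mul_le_two_mul_sum_dist fun i hi =>
      dist_le_two_mul_of_dist_le (mem_weakSupporters.1 (mem_inter.1 hi).2)
  have hY : (#(s \ s') : ℝ) * dist a b
      ≤ #(s \ s') * dist c b + 2 * ∑ i ∈ s \ s', dist (x i) b := by
    have := card_mul_le_two_mul_sum_dist (x := x) (b := b) (s := s \ s')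
      (r := dist a b - dist c b) fun i hi => by
        have hac := mem_weakSupporters.1 (mem_sdiff.1 hi).1
        linarith [dist_triangle_left a b (x i), dist_triangle_right (x i) c b]
    linarith
  have hW : (#(s' \ s) : ℝ) * dist c b ≤ 2 * ∑ i ∈ sᶜ, dist (x i) b := by
    refine (card_mul_le_two_mul_sum_dist fun i hi =>
      dist_le_two_mul_of_dist_le (mem_weakSupporters.1 (mem_sdiff.1 hi).1)).trans ?_
    gcongr 2 * ?_
    exact sum_le_sum_of_subset_of_nonneg (fun i hi => mem_compl.2 (mem_sdiff.1 hi).2)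
      fun i _ _ => dist_nonneg
  have hs : (#(s ∩ s') : ℝ) + #(s \ s') = #s := mod_cast card_inter_add_card_sdiff s s'
  have hs' : (#(s ∩ s') : ℝ) + #(s' \ s) = #s' := by
    rw [inter_comm]; exact_mod_cast card_inter_add_card_sdiff s' s
  have hsc : (#s : ℝ) + #sᶜ = Fintype.card ι := mod_cast card_add_card_compl s
  have hk : (#sᶜ : ℝ) ≤ #(s ∩ s') + #(s \ s') := by linarith
  have hpk : (#(s \ s') : ℝ) + #sᶜ ≤ #(s ∩ s') + 2 * #(s' \ s) := by linarith
  have hexcess := excess_le_of_counts (Nat.cast_nonneg _) dist_nonneg dist_nonneg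
    (sum_nonneg fun i _ => dist_nonneg) (sum_nonneg fun i _ => dist_nonneg) hXu hXt hY hW hk hpk
  have hcost := socialCost_le_add_excess x a c b
  unfold socialCost at hcost ⊢
  rw [sum_eq_sum_inter_add_sum_sdiff_add_sum_compl s s' fun i => dist (x i) b] at hcost ⊢
  linarith

end SocialCost

theorem two_majority_steps_social_cost_factor_five_general
    {X : Type*} [PseudoMetricSpace X] (n : ℕ)
    (x : Fin n → X) (a c b : X)
    (hmaj₁ : (n : ℝ) / 2 ≤
      ((Finset.univ.filter (fun i : Fin n => dist (x i) a ≤ dist (x i) c)).card : ℝ))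
    (hmaj₂ : (n : ℝ) / 2 ≤
      ((Finset.univ.filter (fun i : Fin n => dist (x i) c ≤ dist (x i) b)).card : ℝ)) :
    ∑ i, dist (x i) a ≤ 5 * ∑ i, dist (x i) b :=
  socialCost_le_five_mul_of_two_majority_steps (by simpa [weakSupporters] using hmaj₁)
    (by simpa [weakSupporters] using hmaj₂)

/-- **Two majority steps imply social cost within a factor 5.**
In a pseudometric space with `n` agents located at `x i`, if at least half of the
agents weakly prefer alternative `a` to alternative `c`, and at least half of the
agents weakly prefer `c` to alternative `b`, then `SC(a) ≤ 5 ⬝ SC(b)`, where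
`SC(y) = ∑ i, dist (x i) y`. -/
theorem two_majority_steps_social_cost_factor_five
    {X : Type*} [PseudoMetricSpace X] (n : ℕ) (hn : 1 ≤ n)
    (x : Fin n → X) (a c b : X)
    (hmaj₁ : (n : ℝ) / 2 ≤
      ((Finset.univ.filter (fun i : Fin n => dist (x i) a ≤ dist (x i) c)).card : ℝ))
    (hmaj₂ : (n : ℝ) / 2 ≤
      ((Finset.univ.filter (fun i : Fin n => dist (x i) c ≤ dist (x i) b)).card : ℝ)) :
    ∑ i, dist (x i) a ≤ 5 * ∑ i, dist (x i) b :=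
  two_majority_steps_social_cost_factor_five_general n x a c b hmaj₁ hmaj₂
end

section
/- Let A = {a, b} be a set of two alternatives. For every deterministic voting rule f, which for every number n of agents maps each profile of strict rankings over A to an alternative in A, and for every ε > 0, there exist a number n of agents, a pseudometric instance (points on the real line with the usual distance) and a profile of rankings consistent with it, such that SC(f(≻)) ≥ (3 − ε) · min_{j∈A} SC(j). Hence no deterministic voting rule has distortion smaller than 3 in the metric setting. -/
/-!
Two agents with opposite rankings give a profile that is symmetric in the two alternatives,
so whichever alternative `w` the rule picks, the profile can be realised on the line against
`w`: alternatives at `0` and `1`, the agent preferring `w` at the midpoint `1/2` (where it is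
indifferent) and the other agent exactly at the other alternative. Then `SC(w) = 3/2` while
the other alternative costs `1/2`.
-/

/-- Agent `i` ranks alternative `i` first. -/
def opposedProfile (i : Fin 2) : Fin 2 ≃ Fin 2 := Equiv.swap 0 i

def altLoc (a : Fin 2) : ℝ := a

noncomputable def voterLoc (w i : Fin 2) : ℝ := if i = w then 1 / 2 else altLoc i

lemma opposedProfile_lt_iff {i a b : Fin 2} :
    opposedProfile i a < opposedProfile i b ↔ a = i ∧ b ≠ i := by
  revert i a b; decide

lemma dist_voterLoc_altLoc_self_le (w i b : Fin 2) :
    dist (voterLoc w i) (altLoc i) ≤ dist (voterLoc w i) (altLoc b) := by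
  fin_cases w <;> fin_cases i <;> fin_cases b <;> norm_num [voterLoc, altLoc, Real.dist_eq]

lemma voterLoc_consistent (w i a b : Fin 2) (h : opposedProfile i a < opposedProfile i b) :
    dist (voterLoc w i) (altLoc a) ≤ dist (voterLoc w i) (altLoc b) := by
  obtain ⟨rfl, -⟩ := opposedProfile_lt_iff.mp h
  exact dist_voterLoc_altLoc_self_le w a b

lemma socialCost_voterLoc_self (w : Fin 2) :
    ∑ i, dist (voterLoc w i) (altLoc w) = 3 / 2 := by
  fin_cases w <;> norm_num [Fin.sum_univ_two, voterLoc, altLoc, Real.dist_eq, abs_of_pos]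

lemma min_socialCost_voterLoc (w : Fin 2) :
    min (∑ i, dist (voterLoc w i) (altLoc 0)) (∑ i, dist (voterLoc w i) (altLoc 1)) = 1 / 2 := by
  fin_cases w <;> norm_num [Fin.sum_univ_two, voterLoc, altLoc, Real.dist_eq, abs_of_pos]

/-- **Lower bound of 3 on the distortion of deterministic rules in the metric setting.**
There are two alternatives, indexed by `Fin 2` and located at points `loc 0, loc 1` of
the real line. A deterministic voting rule `f` maps, for every number `n` of agents,
each profile of strict rankings (`σ i a` is the 0-indexed position of alternative `a`
in agent `i`'s ranking) to one of the two alternatives. For every such `f` and every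
`ε > 0` there is an instance — `n ≥ 1` agents located at `x i` on the line, alternative
locations `loc`, and a profile `σ` consistent with the metric — such that the social
cost of the chosen alternative is at least `(3 - ε)` times the minimum social cost,
where `SC(j) = ∑ i, dist (x i) (loc j)`. -/
theorem metric_deterministic_lower_bound_three
    (f : ∀ n : ℕ, (Fin n → (Fin 2 ≃ Fin 2)) → Fin 2)
    (ε : ℝ) (hε : 0 < ε) :
    ∃ n : ℕ, 1 ≤ n ∧
      ∃ (x : Fin n → ℝ) (loc : Fin 2 → ℝ) (σ : Fin n → (Fin 2 ≃ Fin 2)),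
        (∀ i (a b : Fin 2), σ i a < σ i b → dist (x i) (loc a) ≤ dist (x i) (loc b)) ∧
        (3 - ε) * min (∑ i, dist (x i) (loc 0)) (∑ i, dist (x i) (loc 1)) ≤
          ∑ i, dist (x i) (loc (f n σ)) := by
  set w := f 2 opposedProfile
  refine ⟨2, by norm_num, voterLoc w, altLoc, opposedProfile, voterLoc_consistent w, ?_⟩
  rw [min_socialCost_voterLoc, socialCost_voterLoc_self]
  linarith
end

section
/- Let (X, d) be a pseudometric space, let (x_i)_{i∈N} be the locations of n ≥ 1 agents, let A be a finite nonempty set of alternatives (points of X), and for each agent i let t_i ∈ A be a favorite alternative of i, i.e., d(x_i, t_i) ≤ d(x_i, a) for all a ∈ A. Then for every alternative a ∈ A it holds that Σ_{i∈N} SC(t_i) ≤ (3n − 2) · SC(a). Equivalently, the expected social cost of Random Dictatorship, (1/n)·Σ_{i∈N} SC(t_i), is at most (3 − 2/n) times the minimum social cost, so Random Dictatorship has distortion at most 3 − 2/n. -/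
/-!
If agent `i` weakly prefers `t i` to `a`, then by the triangle inequality every other agent `j`
has `d(x j, t i) ≤ d(x j, a) + d(a, x i) + d(x i, t i) ≤ d(x j, a) + 2 d(x i, a)`, while agent `i`
herself has `d(x i, t i) ≤ d(x i, a)`. Hence `SC(t i) ≤ SC(a) + 2 (n - 1) d(x i, a)`, and summing
over `i` gives `∑ i, SC(t i) ≤ n SC(a) + 2 (n - 1) SC(a) = (3n - 2) SC(a)`.
-/

open Finset

section Distortion

variable {X ι : Type*} [PseudoMetricSpace X]

theorem dist_le_add_two_mul_of_dist_le {w y z a : X} (hy : dist z y ≤ dist z a) :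
    dist w y ≤ dist w a + 2 * dist z a := by
  have := dist_triangle4 w a z y
  rw [dist_comm a z] at this
  linarith

variable [Fintype ι]

theorem sum_dist_le_of_dist_le (x : ι → X) {y a : X} (i : ι)
    (hy : dist (x i) y ≤ dist (x i) a) :
    ∑ j, dist (x j) y ≤ ∑ j, dist (x j) a + 2 * (Fintype.card ι - 1) * dist (x i) a := by
  classical
  have hcard : ((univ.erase i).card : ℝ) = Fintype.card ι - 1 :=
    cast_card_erase_of_mem (mem_univ i)
  have hrest : ∑ j ∈ univ.erase i, dist (x j) y
      ≤ ∑ j ∈ univ.erase i, (dist (x j) a + 2 * dist (x i) a) :=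
    sum_le_sum fun j _ => dist_le_add_two_mul_of_dist_le hy
  rw [sum_add_distrib, sum_const, nsmul_eq_mul, hcard] at hrest
  rw [← add_sum_erase _ _ (mem_univ i), ← add_sum_erase _ _ (mem_univ i)]
  linarith

theorem sum_sum_dist_le_of_forall_dist_le (x t : ι → X) {a : X}
    (hfav : ∀ i, dist (x i) (t i) ≤ dist (x i) a) :
    ∑ i, ∑ j, dist (x j) (t i) ≤ (3 * Fintype.card ι - 2) * ∑ j, dist (x j) a :=
  calc ∑ i, ∑ j, dist (x j) (t i)
      ≤ ∑ i, (∑ j, dist (x j) a + 2 * (Fintype.card ι - 1) * dist (x i) a) :=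
        sum_le_sum fun i _ => sum_dist_le_of_dist_le x i (hfav i)
    _ = (3 * Fintype.card ι - 2) * ∑ j, dist (x j) a := by
        rw [sum_add_distrib, sum_const, nsmul_eq_mul, ← mul_sum, card_univ]
        ring

end Distortion

theorem random_dictatorship_distortion_general
    {X : Type*} [PseudoMetricSpace X] (n : ℕ)
    (x : Fin n → X) (A : Finset X)
    (t : Fin n → X)
    (hfav : ∀ i, ∀ a ∈ A, dist (x i) (t i) ≤ dist (x i) a) :
    ∀ a ∈ A,
      ∑ i, ∑ j, dist (x j) (t i) ≤ (3 * (n : ℝ) - 2) * ∑ j, dist (x j) a := by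
  intro a ha
  simpa only [Fintype.card_fin] using sum_sum_dist_le_of_forall_dist_le x t fun i => hfav i a ha

/-- **Random Dictatorship has distortion at most `3 - 2/n` in the metric setting.**
In a pseudometric space with `n ≥ 1` agents located at `x i` and a finite nonempty set
`A` of alternatives, let `t i ∈ A` be a favorite alternative of agent `i` (one closest
to `x i` among `A`). Then for every alternative `a ∈ A`,
`∑ i, SC(t i) ≤ (3n - 2) ⬝ SC(a)`, where `SC(y) = ∑ j, dist (x j) y`; equivalently, the
expected social cost `(1/n) ∑ i, SC(t i)` of Random Dictatorship is at most `3 - 2/n`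
times the minimum social cost. -/
theorem random_dictatorship_distortion
    {X : Type*} [PseudoMetricSpace X] (n : ℕ) (hn : 1 ≤ n)
    (x : Fin n → X) (A : Finset X) (hA : A.Nonempty)
    (t : Fin n → X)
    (htA : ∀ i, t i ∈ A)
    (hfav : ∀ i, ∀ a ∈ A, dist (x i) (t i) ≤ dist (x i) a) :
    ∀ a ∈ A,
      ∑ i, ∑ j, dist (x j) (t i) ≤ (3 * (n : ℝ) - 2) * ∑ j, dist (x j) a :=
  random_dictatorship_distortion_general n x A t hfav
end

section
/- Let N be a finite set of n ≥ 1 agents, let A be a finite nonempty set of alternatives, and let (≻_i)_{i∈N} be any profile of strict rankings over A. For each agent y, let top(y) denote the ≻_y-maximal alternative. Then there exists an alternative j ∈ A whose integral domination graph admits a perfect matching; equivalently, there exist j ∈ A and a bijection σ : N → N such that for every agent x, either j = top(σ(x)) or j ≻_x top(σ(x)). -/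
/-!
Plurality veto. Start from the multiset of top alternatives, one copy per agent, and let the
agents veto one at a time: each agent removes from the current multiset one copy of the
alternative it ranks worst among those still present, and is matched with that alternative.
The alternative left at the end was present at every veto, so every agent weakly prefers it to
the alternative it vetoed. Since the vetoes exhaust the multiset of tops, matching each agent
with an agent whose top it vetoed gives the bijection.
-/

open Finset

/-- `r x a` is the rank agent `x` gives to `a`, smaller being better; `f x` is the alternative
vetoed by agent `x` and `j` the surviving one. -/
theorem exists_veto_winner {ι β γ : Type*} [LinearOrder γ] (r : ι → β → γ)
    {s : Finset ι} (hs : s.Nonempty) :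
    ∀ S : Multiset β, S.card = #s →
      ∃ j ∈ S, ∃ f : ι → β, s.val.map f = S ∧ ∀ x ∈ s, r x j ≤ r x (f x) := by
  classical
  induction hs using Finset.Nonempty.cons_induction with
  | singleton x =>
    intro S hS
    obtain ⟨a, rfl⟩ := Multiset.card_eq_one.mp hS
    exact ⟨a, Multiset.mem_singleton_self a, fun _ => a, rfl, by simp⟩
  | cons x t hx _ ih =>
    intro S hS
    have hS₀ : S ≠ 0 := Multiset.card_pos.mp (by rw [hS, card_cons]; omega)
    obtain ⟨a, ha, ha_worst⟩ := Multiset.exists_max_image (r x) hS₀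
    obtain ⟨j, hj, f, hf, hf_le⟩ :=
      ih (S.erase a) (by rw [Multiset.card_erase_of_mem ha, hS, card_cons]; rfl)
    have hjS : j ∈ S := Multiset.mem_of_mem_erase hj
    refine ⟨j, hjS, Function.update f x a, ?_, ?_⟩
    · have hft : t.val.map (Function.update f x a) = t.val.map f :=
        Multiset.map_congr rfl fun y hy => Function.update_of_ne (ne_of_mem_of_not_mem hy hx) _ _
      rw [Finset.cons_val, Multiset.map_cons, Function.update_self, hft, hf, Multiset.cons_erase ha]
    · intro y hy
      obtain rfl | hy := Finset.mem_cons.mp hy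
      · simpa using ha_worst j hjS
      · simpa [Function.update_of_ne (ne_of_mem_of_not_mem hy hx)] using hf_le y hy

theorem exists_perm_of_map_univ_val_eq {α β : Type*} [Fintype α]
    {f g : α → β} (h : univ.val.map f = univ.val.map g) :
    ∃ π : Equiv.Perm α, ∀ x, g (π x) = f x := by
  classical
  have hfiber : ∀ b, Fintype.card {x // f x = b} = Fintype.card {x // g x = b} := by
    intro b
    have := congrArg (Multiset.count b) h
    simp only [Multiset.count_map, Fintype.card_subtype] at this ⊢
    simpa [Finset.card_def, Finset.filter_val, eq_comm] using this
  exact ⟨Equiv.ofFiberEquiv fun b => Fintype.equivOfCardEq (hfiber b),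
    Equiv.ofFiberEquiv_map _⟩

/-- **Existence of an alternative whose integral domination graph has a perfect
matching** (Gkatzelis, Halpern, Shah). For `n ≥ 1` agents with strict rankings over
`m ≥ 1` alternatives (`σ x a` is the 0-indexed position of alternative `a` in agent
`x`'s ranking, so the top alternative of agent `y` is `(σ y).symm ⟨0, hm⟩`), there
exist an alternative `j` and a bijection `π` of the agents such that every agent `x`
weakly prefers `j` to the top alternative of agent `π x`, i.e.
`σ x j ≤ σ x (top (π x))` (equality holds exactly when `j` *is* that top alternative,
since rankings are strict). -/
theorem exists_plurality_matching_alternative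
    (n m : ℕ) (hn : 1 ≤ n) (hm : 1 ≤ m)
    (σ : Fin n → (Fin m ≃ Fin m)) :
    ∃ (j : Fin m) (π : Equiv.Perm (Fin n)),
      ∀ x : Fin n, σ x j ≤ σ x ((σ (π x)).symm ⟨0, hm⟩) := by
  let top : Fin n → Fin m := fun y => (σ y).symm ⟨0, hm⟩
  have hagents : (univ : Finset (Fin n)).Nonempty := univ_nonempty_iff.mpr ⟨⟨0, hn⟩⟩
  obtain ⟨j, -, f, hf, hj⟩ :=
    exists_veto_winner (fun x a => σ x a) hagents (univ.val.map top) (by simp)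
  obtain ⟨π, hπ⟩ := exists_perm_of_map_univ_val_eq hf
  exact ⟨j, π, fun x => (hj x (mem_univ x)).trans_eq (congrArg (σ x) (hπ x)).symm⟩
end

section
/- Let (X, d) be a pseudometric space, (x_i)_{i∈N} the locations of n ≥ 1 agents, and A a finite nonempty set of alternatives (points of X). For each agent y, let t_y ∈ A be a favorite alternative of y, i.e., d(x_y, t_y) ≤ d(x_y, a) for all a ∈ A. Suppose j ∈ A is such that there exists a bijection σ : N → N with d(x_x, j) ≤ d(x_x, t_{σ(x)}) for every agent x (i.e., the integral domination graph of j admits a perfect matching). Then SC(j) ≤ 3 · SC(j') for every alternative j' ∈ A. -/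
/-!
If agent `i` is matched to agent `π i`, then for any alternative `j'` the triangle inequality
through `j'` and `x (π i)`, together with `x (π i)` preferring its favorite to `j'`, gives
`d(x i, j) ≤ d(x i, j') + 2 d(x (π i), j')`. Summing over `i`, the second term sums to
`2 SC(j')` because `π` is a bijection.
-/

open Finset

lemma dist_le_add_two_mul_of_favorite {X : Type*} [PseudoMetricSpace X] {p q f j a : X}
    (hf : dist q f ≤ dist q a) (hj : dist p j ≤ dist p f) :
    dist p j ≤ dist p a + 2 * dist q a :=
  calc dist p j ≤ dist p f := hj
    _ ≤ dist p a + dist a q + dist q f := dist_triangle4 _ _ _ _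
    _ ≤ dist p a + 2 * dist q a := by rw [dist_comm a q]; linarith

lemma sum_le_three_mul_sum_of_le_add_two_mul_perm {ι : Type*} [Fintype ι] {f g : ι → ℝ}
    (π : Equiv.Perm ι) (h : ∀ i, f i ≤ g i + 2 * g (π i)) :
    ∑ i, f i ≤ 3 * ∑ i, g i :=
  calc ∑ i, f i ≤ ∑ i, (g i + 2 * g (π i)) := sum_le_sum fun i _ => h i
    _ = ∑ i, g i + 2 * ∑ i, g (π i) := by rw [sum_add_distrib, mul_sum]
    _ = 3 * ∑ i, g i := by rw [Equiv.sum_comp π g]; ring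

theorem plurality_matching_alternative_distortion_three_general
    {X : Type*} [PseudoMetricSpace X] (n : ℕ)
    (x : Fin n → X) (A : Finset X)
    (t : Fin n → X)
    (hfav : ∀ y, ∀ a ∈ A, dist (x y) (t y) ≤ dist (x y) a)
    (j : X)
    (π : Equiv.Perm (Fin n))
    (hmatch : ∀ i, dist (x i) j ≤ dist (x i) (t (π i))) :
    ∀ j' ∈ A, ∑ i, dist (x i) j ≤ 3 * ∑ i, dist (x i) j' := fun j' hj' =>
  sum_le_three_mul_sum_of_le_add_two_mul_perm π fun i =>
    dist_le_add_two_mul_of_favorite (hfav (π i) j' hj') (hmatch i)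

/-- **A perfect matching in the integral domination graph implies distortion 3.**
In a pseudometric space with `n ≥ 1` agents located at `x i` and a finite nonempty set
`A` of alternatives, let `t y ∈ A` be a favorite alternative of agent `y` (closest to
`x y` among `A`). If `j ∈ A` admits a bijection `π` of the agents such that every agent
`i` is weakly closer to `j` than to the favorite alternative of agent `π i` (i.e. the
integral domination graph of `j` has a perfect matching), then
`SC(j) ≤ 3 ⬝ SC(j')` for every alternative `j' ∈ A`, where `SC(y) = ∑ i, dist (x i) y`. -/
theorem plurality_matching_alternative_distortion_three
    {X : Type*} [PseudoMetricSpace X] (n : ℕ) (hn : 1 ≤ n)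
    (x : Fin n → X) (A : Finset X) (hA : A.Nonempty)
    (t : Fin n → X)
    (htA : ∀ y, t y ∈ A)
    (hfav : ∀ y, ∀ a ∈ A, dist (x y) (t y) ≤ dist (x y) a)
    (j : X) (hj : j ∈ A)
    (π : Equiv.Perm (Fin n))
    (hmatch : ∀ i, dist (x i) j ≤ dist (x i) (t (π i))) :
    ∀ j' ∈ A, ∑ i, dist (x i) j ≤ 3 * ∑ i, dist (x i) j' :=
  plurality_matching_alternative_distortion_three_general n x A t hfav j π hmatch
end

section
/- There exists a constant c > 0 such that for every n ≥ 1 and every randomized ordinal one-sided matching rule f, which maps each profile of strict rankings of n agents over n items to a probability distribution over perfect matchings (bijections from agents to items), there exists an instance with unit-sum valuations and consistent rankings ≻ such that max_{μ} SW(μ) ≥ c·√n · E_{μ∼f(≻)}[SW(μ)], where the maximum is over all perfect matchings μ. In particular, every randomized ordinal rule for one-sided matching, including Random Serial Dictatorship, has distortion Ω(√n). -/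
/-!
Let `k = ⌊√n⌋` and let every agent rank the item `i % k` first. Each of the `k` residue classes
of agents contains at least `k` agents competing for the same top item, so whatever lottery the
rule outputs, some agent of each class receives its top item with probability at most `1/k`.
Making these `k` agents unit-demand for their top item and all other agents uniform, the
expected welfare is at most `k ⬝ 1/k + 1 = 2`, while matching the `k` chosen agents to their top
items gives welfare `k ≥ √n / 2`.
-/

open Finset

theorem Fin.le_card_filter_val_mod_eq {n k j : ℕ} (hkn : k * k ≤ n) (hj : j < k) :
    k ≤ #{i : Fin n | (i : ℕ) % k = j} := by
  have hlt : ∀ m < k, m * k + j < n := fun m hm => by nlinarith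
  have hn : 0 < n := (hlt 0 (by omega)).trans_le' (Nat.zero_le _)
  refine le_card_of_inj_on_range (fun m => ⟨(m * k + j) % n, Nat.mod_lt _ hn⟩)
    (fun m hm => ?_) (fun a ha b hb hab => ?_)
  · simp [Nat.mod_eq_of_lt (hlt m hm), Nat.mod_eq_of_lt hj]
  · simp only [Fin.mk.injEq, Nat.mod_eq_of_lt (hlt a ha), Nat.mod_eq_of_lt (hlt b hb)] at hab
    exact Nat.eq_of_mul_eq_mul_right (by omega) (Nat.add_right_cancel hab)

namespace OneSidedMatching

variable {α : Type*} [Fintype α] [DecidableEq α]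

def assignProb (p : Equiv.Perm α → ℝ) (i g : α) : ℝ :=
  ∑ μ, if μ i = g then p μ else 0

def expectedWelfare (p : Equiv.Perm α → ℝ) (v : α → α → ℝ) : ℝ :=
  ∑ μ, p μ * ∑ i, v i (μ i)

theorem expectedWelfare_nonneg {p : Equiv.Perm α → ℝ} (hp : ∀ μ, 0 ≤ p μ) {v : α → α → ℝ}
    (hv : ∀ i g, 0 ≤ v i g) : 0 ≤ expectedWelfare p v :=
  sum_nonneg fun μ _ => mul_nonneg (hp μ) (sum_nonneg fun i _ => hv i (μ i))

theorem expectedWelfare_eq_sum (p : Equiv.Perm α → ℝ) (v : α → α → ℝ) :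
    expectedWelfare p v = ∑ i, ∑ μ, p μ * v i (μ i) := by
  simp_rw [expectedWelfare, mul_sum]
  exact sum_comm

theorem assignProb_nonneg {p : Equiv.Perm α → ℝ} (hp : ∀ μ, 0 ≤ p μ) (i g : α) :
    0 ≤ assignProb p i g :=
  sum_nonneg fun μ _ => by split_ifs <;> simp [hp]

theorem sum_assignProb (p : Equiv.Perm α → ℝ) (g : α) :
    ∑ i, assignProb p i g = ∑ μ, p μ := by
  unfold assignProb
  rw [sum_comm]
  refine sum_congr rfl fun μ _ => ?_
  simp_rw [← μ.eq_symm_apply]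
  simp

theorem exists_assignProb_le {p : Equiv.Perm α → ℝ} (hp0 : ∀ μ, 0 ≤ p μ)
    (hp1 : ∑ μ, p μ = 1) (g : α) {s : Finset α} {k : ℕ} (hk : 0 < k) (hs : k ≤ #s) :
    ∃ i ∈ s, assignProb p i g ≤ 1 / k := by
  refine exists_le_of_sum_le (card_pos.mp (hk.trans_le hs)) ?_
  calc ∑ i ∈ s, assignProb p i g ≤ ∑ i, assignProb p i g :=
        sum_le_sum_of_subset_of_nonneg (subset_univ s) fun i _ _ => assignProb_nonneg hp0 i g
    _ = 1 := by rw [sum_assignProb, hp1]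
    _ ≤ ∑ _i ∈ s, (1 / k : ℝ) := by
        rw [sum_const, nsmul_eq_mul, mul_one_div, one_le_div (by positivity)]
        exact_mod_cast hs

theorem exists_injOn_assignProb_le {p : Equiv.Perm α → ℝ} (hp0 : ∀ μ, 0 ≤ p μ)
    (hp1 : ∑ μ, p μ = 1) (t : α → α) {T : Finset α} {k : ℕ} (hk : 0 < k)
    (hT : ∀ g ∈ T, k ≤ #{i | t i = g}) :
    ∃ S : Finset α, #S = #T ∧ Set.InjOn t S ∧ ∀ i ∈ S, assignProb p i (t i) ≤ 1 / k := by
  have : ∀ g, ∃ i, g ∈ T → t i = g ∧ assignProb p i g ≤ 1 / k := by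
    intro g
    by_cases hg : g ∈ T
    · obtain ⟨i, hi, hle⟩ := exists_assignProb_le hp0 hp1 g hk (hT g hg)
      exact ⟨i, fun _ => ⟨(mem_filter.mp hi).2, hle⟩⟩
    · exact ⟨g, fun h => absurd h hg⟩
  choose c hc using this
  have htc : ∀ g ∈ T, t (c g) = g := fun g hg => (hc g hg).1
  refine ⟨T.image c, card_image_of_injOn fun g hg g' hg' h => ?_, ?_, ?_⟩
  · rw [← htc g hg, ← htc g' hg', h]
  · rw [coe_image]
    rintro _ ⟨g, hg, rfl⟩ _ ⟨g', hg', rfl⟩ h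
    rw [htc g hg, htc g' hg'] at h
    rw [h]
  · rintro _ hi
    obtain ⟨g, hg, rfl⟩ := mem_image.mp hi
    rw [htc g hg]
    exact (hc g hg).2

noncomputable def hardValuation (S : Finset α) (t : α → α) (i g : α) : ℝ :=
  if i ∈ S then (if g = t i then 1 else 0) else (Fintype.card α : ℝ)⁻¹

variable {S : Finset α} {t : α → α}

theorem hardValuation_nonneg (i g : α) : 0 ≤ hardValuation S t i g := by
  unfold hardValuation
  split_ifs <;> positivity

theorem sum_hardValuation [Nonempty α] (i : α) : ∑ g, hardValuation S t i g = 1 := by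
  unfold hardValuation
  split_ifs <;> simp

theorem hardValuation_le_of_lt {ι : Type*} [Preorder ι] (σ : α → α → ι)
    (htop : ∀ i g, σ i (t i) ≤ σ i g) {i g g' : α} (h : σ i g < σ i g') :
    hardValuation S t i g' ≤ hardValuation S t i g := by
  by_cases hi : i ∈ S
  · have hg' : g' ≠ t i := by
      rintro rfl
      exact (htop i g).not_gt h
    simp only [hardValuation, hi, hg', if_true, if_false]
    split_ifs <;> norm_num
  · simp [hardValuation, hi]

theorem sum_mul_hardValuation_of_mem (p : Equiv.Perm α → ℝ) {i : α} (hi : i ∈ S) :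
    ∑ μ, p μ * hardValuation S t i (μ i) = assignProb p i (t i) := by
  simp [hardValuation, hi, assignProb]

theorem sum_mul_hardValuation_of_notMem {p : Equiv.Perm α → ℝ} (hp1 : ∑ μ, p μ = 1) {i : α}
    (hi : i ∉ S) : ∑ μ, p μ * hardValuation S t i (μ i) = (Fintype.card α : ℝ)⁻¹ := by
  simp [hardValuation, hi, ← sum_mul, hp1]

theorem expectedWelfare_hardValuation_le {p : Equiv.Perm α → ℝ} (hp1 : ∑ μ, p μ = 1) {q : ℝ}
    (hq : ∀ i ∈ S, assignProb p i (t i) ≤ q) :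
    expectedWelfare p (hardValuation S t) ≤ #S * q + 1 := by
  have hN : (0 : ℝ) ≤ (Fintype.card α : ℝ)⁻¹ := by positivity
  have hagent : ∀ i, ∑ μ, p μ * hardValuation S t i (μ i) ≤
      (if i ∈ S then q else 0) + (Fintype.card α : ℝ)⁻¹ := by
    intro i
    by_cases hi : i ∈ S
    · rw [sum_mul_hardValuation_of_mem p hi, if_pos hi]
      linarith [hq i hi]
    · rw [sum_mul_hardValuation_of_notMem hp1 hi, if_neg hi, zero_add]
  calc expectedWelfare p (hardValuation S t)
      ≤ ∑ i, ((if i ∈ S then q else 0) + (Fintype.card α : ℝ)⁻¹) := by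
        rw [expectedWelfare_eq_sum]
        exact sum_le_sum fun i _ => hagent i
    _ ≤ #S * q + 1 := by
        rw [sum_add_distrib, sum_ite_mem, univ_inter, sum_const, sum_const, card_univ,
          nsmul_eq_mul, nsmul_eq_mul]
        linarith [mul_inv_le_one (a := (Fintype.card α : ℝ))]

theorem exists_perm_card_le_welfare_hardValuation (ht : Set.InjOn t S) :
    ∃ μ : Equiv.Perm α, (#S : ℝ) ≤ ∑ i, hardValuation S t i (μ i) := by
  obtain ⟨e, he⟩ := exists_equiv_extend_of_card_eq (t := univ) (card_univ.symm)
    (subset_univ (S.image t)) ht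
  refine ⟨e.trans (Equiv.subtypeUnivEquiv mem_univ), ?_⟩
  calc (#S : ℝ) = ∑ i ∈ S, hardValuation S t i (e i) := by
        rw [sum_congr rfl fun i hi => show hardValuation S t i (e i) = 1 by
          simp [hardValuation, hi, he i hi]]
        simp
    _ ≤ ∑ i, hardValuation S t i (e i) :=
        sum_le_sum_of_subset_of_nonneg (subset_univ S) fun i _ _ => hardValuation_nonneg i _

end OneSidedMatching

open OneSidedMatching in
/-- **Lower bound of `Ω(√n)` for randomized ordinal one-sided matching rules**
(Filos-Ratsikas, Frederiksen, Zhang). There is a constant `c > 0` such that for every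
`n ≥ 1` and every randomized ordinal matching rule `f` — mapping each profile of strict
rankings of the `n` agents over the `n` items (`σ i g` is the 0-indexed position of
item `g` in agent `i`'s ranking) to a probability distribution over perfect matchings
(bijections `Fin n ≃ Fin n` from agents to items) — there is an instance with
nonnegative unit-sum valuations `v` and consistent rankings `σ` in which some perfect
matching `μ` has social welfare at least `c⬝√n` times the expected social welfare of
`f σ`, where `SW(μ) = ∑ i, v i (μ i)`. -/
theorem randomized_matching_distortion_lower_bound :
    ∃ c : ℝ, 0 < c ∧
      ∀ (n : ℕ), 1 ≤ n →
      ∀ f : (Fin n → (Fin n ≃ Fin n)) → (Equiv.Perm (Fin n) → ℝ),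
        (∀ σ μ, 0 ≤ f σ μ) →
        (∀ σ, ∑ μ : Equiv.Perm (Fin n), f σ μ = 1) →
        ∃ (v : Fin n → Fin n → ℝ) (σ : Fin n → (Fin n ≃ Fin n)),
          (∀ i g, 0 ≤ v i g) ∧ (∀ i, ∑ g, v i g = 1) ∧
          (∀ i g g', σ i g < σ i g' → v i g' ≤ v i g) ∧
          ∃ μ : Equiv.Perm (Fin n),
            c * Real.sqrt n *
                (∑ μ' : Equiv.Perm (Fin n), f σ μ' * ∑ i, v i (μ' i)) ≤
              ∑ i, v i (μ i) := by
  refine ⟨1 / 4, by norm_num, fun n hn f hf0 hf1 => ?_⟩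
  have : NeZero n := ⟨by omega⟩
  set k := Nat.sqrt n
  have hk : 0 < k := Nat.sqrt_pos.mpr hn
  let t : Fin n → Fin n := fun i => ⟨i % k, (Nat.mod_le _ _).trans_lt i.2⟩
  let σ : Fin n → Fin n ≃ Fin n := fun i => Equiv.swap (t i) 0
  obtain ⟨S, hST, htS, hP⟩ := exists_injOn_assignProb_le (hf0 σ) (hf1 σ) t
    (T := {g | (g : ℕ) < k}) hk fun g hg => by
      simpa [t, Fin.ext_iff] using
        Fin.le_card_filter_val_mod_eq (Nat.sqrt_le n) (mem_filter.mp hg).2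
  have hS : #S = k := by rw [hST, Fin.card_filter_val_lt, min_eq_right (Nat.sqrt_le_self n)]
  obtain ⟨μ, hμ⟩ := exists_perm_card_le_welfare_hardValuation htS
  refine ⟨hardValuation S t, σ, hardValuation_nonneg, sum_hardValuation,
    fun i g g' => hardValuation_le_of_lt (fun i g => σ i g) (fun i g => ?_), μ, ?_⟩
  · simp [σ]
  have hE : expectedWelfare (f σ) (hardValuation S t) ≤ 2 := by
    have := expectedWelfare_hardValuation_le (hf1 σ) hP
    rwa [hS, mul_one_div_cancel (by positivity), one_add_one_eq_two] at this
  have hsqrt : Real.sqrt n ≤ 2 * k := by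
    have : (1 : ℝ) ≤ k := by exact_mod_cast hk
    linarith [Real.real_sqrt_le_nat_sqrt_succ (a := n)]
  calc 1 / 4 * Real.sqrt n * expectedWelfare (f σ) (hardValuation S t)
      ≤ 1 / 4 * (2 * k) * 2 := by
        gcongr
        exact expectedWelfare_nonneg (hf0 σ) hardValuation_nonneg
    _ = #S := by rw [hS]; ring
    _ ≤ _ := hμ
end

section
/- There exists a constant c > 0 such that for every n ≥ 1, the expected social welfare of Random Serial Dictatorship on any one-sided matching instance with unit-sum valuations and consistent rankings satisfies E[SW(RSD(≻))] ≥ (1/(c·√n)) · max_{μ} SW(μ), where the maximum is over all perfect matchings μ. That is, Random Serial Dictatorship has distortion O(√n). -/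
/-- The most-preferred item of agent `i` among a finset `S` of items, according to the
position function `σ i` (lower position = more preferred); junk value if `S = ∅`. -/
noncomputable def bestItem (n : ℕ) (σ : Fin n → (Fin n ≃ Fin n)) (i : Fin n)
    (S : Finset (Fin n)) : Fin n :=
  if h : (S.image (σ i)).Nonempty then (σ i).symm ((S.image (σ i)).min' h) else i

/-- The set of items taken after the first `j` agents, in the order `π` (agent `π 0`
first, then `π 1`, ...), have each picked their most-preferred remaining item. -/
noncomputable def takenItems (n : ℕ) (σ : Fin n → (Fin n ≃ Fin n))
    (π : Equiv.Perm (Fin n)) : ℕ → Finset (Fin n)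
  | 0 => ∅
  | j + 1 =>
    if h : j < n then
      insert (bestItem n σ (π ⟨j, h⟩) (Finset.univ \ takenItems n σ π j))
        (takenItems n σ π j)
    else takenItems n σ π j

/-- The serial dictatorship matching for the ordering `π` of the agents: agent `i`,
who moves at position `π.symm i`, receives her most-preferred item among those not
taken by the agents moving before her. -/
noncomputable def serialDictatorship (n : ℕ) (σ : Fin n → (Fin n ≃ Fin n))
    (π : Equiv.Perm (Fin n)) (i : Fin n) : Fin n :=
  bestItem n σ i (Finset.univ \ takenItems n σ π ((π.symm i).val))

/-!
Write `R` for the welfare of `μ`. The agent moving at position `p` receives at least her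
`(p + 1)`-st choice, and every agent is equally likely to move at every position, so unit-sum
valuations give `E[SW] ≥ 1`. On the other hand, the agent moving at position `j` receives at
least the value of her `μ`-item unless one of the `j` earlier agents took it; by symmetry among
the `n - j` agents who have not moved yet, this happens with probability at most
`j / (n - j) ≤ 2j / n` when `2j ≤ n`. Her expected value is thus at least `(R - 2j) / n`, and
summing the positive parts over `j` gives `E[SW] ≥ R² / (4n)`. For `x = R / (2√n)` this yields
`E[SW] ≥ max 1 x² ≥ x`.
-/

open Finset Equiv Nat

theorem sum_perm_apply {α : Type*} [Fintype α] [DecidableEq α] (a : α) (f : α → ℝ) :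
    ∑ π : Perm α, f (π a) = (Fintype.card α - 1)! * ∑ x, f x := by
  have hcard : Fintype.card α ≠ 0 := (Fintype.card_pos_iff.mpr ⟨a⟩).ne'
  have hswap (b : α) : ∑ π : Perm α, f (π b) = ∑ π : Perm α, f (π a) :=
    Fintype.sum_equiv (Equiv.mulRight (swap a b)) _ _ fun π => by simp
  have hsym :
      (Fintype.card α : ℝ) * ∑ π : Perm α, f (π a) = (Fintype.card α)! * ∑ x, f x :=
    calc _ = ∑ b, ∑ π : Perm α, f (π b) := by simp [hswap]
      _ = ∑ π : Perm α, ∑ b, f (π b) := sum_comm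
      _ = ∑ _π : Perm α, ∑ x, f x := sum_congr rfl fun π _ => Equiv.sum_comp π f
      _ = _ := by simp [Fintype.card_perm]
  rw [← mul_factorial_pred hcard, cast_mul, mul_assoc] at hsym
  exact mul_left_cancel₀ (by exact_mod_cast hcard) hsym

theorem sq_le_four_mul_sum_max_sub {R : ℝ} {n : ℕ} (hR : 0 ≤ R) (hRn : R ≤ 2 * n) :
    R ^ 2 ≤ 4 * ∑ p ∈ range n, max (R - 2 * p) 0 := by
  -- `f` telescopes from `R ^ 2` down to `0`, and each drop is at most `4 * max (R - 2 * p) 0`.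
  set f : ℕ → ℝ := fun p => max (R - 2 * p) 0 ^ 2
  have hstep (p : ℕ) : f p - f (p + 1) ≤ 4 * max (R - 2 * p) 0 := by
    simp only [f]
    push_cast
    rcases le_total (R - 2 * p) 0 with h | h <;>
      rcases le_total (R - 2 * (p + 1)) 0 with h' | h' <;>
      simp only [max_eq_left, max_eq_right, h, h'] <;> nlinarith
  calc R ^ 2 = f 0 - f n := by simp [f, max_eq_left hR, hRn]
    _ = ∑ p ∈ range n, (f p - f (p + 1)) := (sum_range_sub' f n).symm
    _ ≤ _ := by rw [mul_sum]; exact sum_le_sum fun p _ => hstep p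

section SerialDictatorship

variable {n : ℕ} (σ : Fin n → (Fin n ≃ Fin n))

theorem bestItem_mem (i : Fin n) {S : Finset (Fin n)} (hS : S.Nonempty) :
    bestItem n σ i S ∈ S := by
  obtain ⟨g, hg, hgeq⟩ := mem_image.mp ((S.image (σ i)).min'_mem (hS.image _))
  rw [bestItem, dif_pos (hS.image _), ← hgeq, symm_apply_apply]
  exact hg

theorem rank_bestItem_le (i : Fin n) {S : Finset (Fin n)} {g : Fin n} (hg : g ∈ S) :
    σ i (bestItem n σ i S) ≤ σ i g := by
  have h : (S.image (σ i)).Nonempty := Nonempty.image ⟨g, hg⟩ _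
  rw [bestItem, dif_pos h, apply_symm_apply]
  exact min'_le _ _ (mem_image_of_mem _ hg)

theorem card_takenItems (π : Perm (Fin n)) {j : ℕ} (hj : j ≤ n) :
    #(takenItems n σ π j) = j := by
  induction j with
  | zero => simp [takenItems]
  | succ j ih =>
    have hjn : j < n := hj
    have hne : (univ \ takenItems n σ π j).Nonempty := by
      rw [← card_pos, card_sdiff_of_subset (subset_univ _), Finset.card_univ, Fintype.card_fin,
        ih hjn.le]
      omega
    rw [takenItems, dif_pos hjn,
      card_insert_of_notMem (mem_sdiff.mp (bestItem_mem σ _ hne)).2, ih hjn.le]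

theorem takenItems_congr {π π' : Perm (Fin n)} {j : ℕ}
    (h : ∀ x : Fin n, x.val < j → π x = π' x) :
    takenItems n σ π j = takenItems n σ π' j := by
  induction j with
  | zero => rfl
  | succ j ih =>
    have ih := ih fun x hx => h x (lt_succ_of_lt hx)
    by_cases hjn : j < n
    · rw [takenItems, dif_pos hjn, takenItems, dif_pos hjn, ih, h ⟨j, hjn⟩ (lt_succ_self j)]
    · rw [takenItems, dif_neg hjn, takenItems, dif_neg hjn, ih]

theorem serialDictatorship_apply_apply (π : Perm (Fin n)) (p : Fin n) :
    serialDictatorship n σ π (π p) = bestItem n σ (π p) (univ \ takenItems n σ π p) := by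
  rw [serialDictatorship, symm_apply_apply]

theorem rank_serialDictatorship_le (π : Perm (Fin n)) (i : Fin n) :
    σ i (serialDictatorship n σ π i) ≤ π.symm i := by
  set p := π.symm i
  have hfree : ¬ (Iic p).image (σ i).symm ⊆ takenItems n σ π p := by
    intro hsub
    have hcard := card_le_card hsub
    rw [card_image_of_injective _ (σ i).symm.injective, Fin.card_Iic,
      card_takenItems σ π p.isLt.le] at hcard
    omega
  obtain ⟨g, hg, hgfree⟩ := not_subset.mp hfree
  obtain ⟨q, hq, rfl⟩ := mem_image.mp hg
  calc σ i (serialDictatorship n σ π i) ≤ σ i ((σ i).symm q) :=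
        rank_bestItem_le σ i (mem_sdiff.mpr ⟨mem_univ _, hgfree⟩)
    _ ≤ p := by rw [apply_symm_apply]; exact mem_Iic.mp hq

theorem card_mem_takenItems_le (μ : Perm (Fin n)) (j : Fin n) :
    (n - j) * #{π : Perm (Fin n) | μ (π j) ∈ takenItems n σ π j} ≤ j * n ! := by
  -- `π * swap j m` makes the same first `j` picks as `π` and puts agent `π m` at position `j`.
  have hswap (m : Fin n) (hm : m ∈ Ici j) :
      #{π : Perm (Fin n) | μ (π j) ∈ takenItems n σ π j}
        = #{π : Perm (Fin n) | μ (π m) ∈ takenItems n σ π j} := by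
    refine card_equiv (Equiv.mulRight (swap j m)) fun π => ?_
    have hprefix : takenItems n σ (π * swap j m) j = takenItems n σ π j :=
      takenItems_congr σ fun x hx => by
        rw [Perm.mul_apply, swap_apply_of_ne_of_ne (Fin.ne_of_lt hx)
          (Fin.ne_of_lt (lt_of_lt_of_le hx (mem_Ici.mp hm)))]
    simp [hprefix]
  calc (n - j) * #{π : Perm (Fin n) | μ (π j) ∈ takenItems n σ π j}
      = ∑ m ∈ Ici j, #{π : Perm (Fin n) | μ (π m) ∈ takenItems n σ π j} := by
        rw [← Fin.card_Ici, ← smul_eq_mul, ← sum_const]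
        exact sum_congr rfl hswap
    _ = ∑ π : Perm (Fin n), #{m ∈ Ici j | μ (π m) ∈ takenItems n σ π j} := by
        simp only [card_filter]
        exact sum_comm
    _ ≤ ∑ π : Perm (Fin n), #{m | μ (π m) ∈ takenItems n σ π j} :=
        sum_le_sum fun π _ => card_le_card (filter_subset_filter _ (subset_univ _))
    _ = ∑ _π : Perm (Fin n), (j : ℕ) := sum_congr rfl fun π _ => by
        rw [card_equiv (π.trans μ) (t := takenItems n σ π j) (by simp),
          card_takenItems σ π j.isLt.le]
    _ = j * n ! := by simp [Fintype.card_perm, mul_comm]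

theorem card_mem_takenItems_le_of_two_mul_le (μ : Perm (Fin n)) (j : Fin n) (hj : 2 * j ≤ n) :
    #{π : Perm (Fin n) | μ (π j) ∈ takenItems n σ π j} ≤ 2 * j * (n - 1)! := by
  have hn : 0 < n := j.pos
  refine le_of_mul_le_mul_left ?_ hn
  calc n * #{π : Perm (Fin n) | μ (π j) ∈ takenItems n σ π j}
      ≤ 2 * ((n - j) * #{π : Perm (Fin n) | μ (π j) ∈ takenItems n σ π j}) := by
        rw [← mul_assoc]; gcongr; omega
    _ ≤ 2 * (j * n !) := Nat.mul_le_mul_left 2 (card_mem_takenItems_le σ μ j)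
    _ = n * (2 * j * (n - 1)!) := by rw [← mul_factorial_pred hn.ne']; ring

end SerialDictatorship

section Welfare

variable {n : ℕ} {v : Fin n → Fin n → ℝ} {σ : Fin n → (Fin n ≃ Fin n)}

theorem valuation_le_one (h0 : ∀ i g, 0 ≤ v i g) (h1 : ∀ i, ∑ g, v i g = 1) (i g : Fin n) :
    v i g ≤ 1 :=
  h1 i ▸ single_le_sum (fun g _ => h0 i g) (mem_univ g)

theorem sum_valuation_le (h0 : ∀ i g, 0 ≤ v i g) (h1 : ∀ i, ∑ g, v i g = 1)
    (μ : Perm (Fin n)) : ∑ i, v i (μ i) ≤ n := by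
  simpa using sum_le_sum fun i (_ : i ∈ univ) => valuation_le_one h0 h1 i (μ i)

theorem valuation_le_of_rank_le (hcons : ∀ i g g', σ i g < σ i g' → v i g' ≤ v i g)
    {i g g' : Fin n} (h : σ i g ≤ σ i g') : v i g' ≤ v i g := by
  rcases h.lt_or_eq with h | h
  · exact hcons i g g' h
  · rw [(σ i).injective h]

theorem factorial_le_sum_welfare (hn : 0 < n) (h1 : ∀ i, ∑ g, v i g = 1)
    (hcons : ∀ i g g', σ i g < σ i g' → v i g' ≤ v i g) :
    (n ! : ℝ) ≤ ∑ π : Perm (Fin n), ∑ i, v i (serialDictatorship n σ π i) := by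
  have hrank (π : Perm (Fin n)) (i : Fin n) :
      v i ((σ i).symm (π.symm i)) ≤ v i (serialDictatorship n σ π i) :=
    valuation_le_of_rank_le hcons (by simpa using rank_serialDictatorship_le σ π i)
  have hagent (i : Fin n) : ∑ π : Perm (Fin n), v i ((σ i).symm (π.symm i)) = (n - 1)! := by
    rw [← Equiv.sum_comp (Equiv.inv (Perm (Fin n)))]
    simp only [Equiv.inv_apply, Perm.inv_def, symm_symm]
    rw [sum_perm_apply i fun x => v i ((σ i).symm x), Fintype.card_fin,
      Equiv.sum_comp (σ i).symm (v i), h1 i, mul_one]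
  calc (n ! : ℝ) = ∑ i : Fin n, ∑ π : Perm (Fin n), v i ((σ i).symm (π.symm i)) := by
        simp [hagent, ← mul_factorial_pred hn.ne']
    _ = ∑ π : Perm (Fin n), ∑ i, v i ((σ i).symm (π.symm i)) := sum_comm
    _ ≤ _ := sum_le_sum fun π _ => sum_le_sum fun i _ => hrank π i

theorem factorial_mul_max_le_sum_at_position (h0 : ∀ i g, 0 ≤ v i g)
    (h1 : ∀ i, ∑ g, v i g = 1) (hcons : ∀ i g g', σ i g < σ i g' → v i g' ≤ v i g)
    (μ : Perm (Fin n)) (j : Fin n) :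
    ((n - 1)! : ℝ) * max (∑ i, v i (μ i) - 2 * j) 0
      ≤ ∑ π : Perm (Fin n), v (π j) (serialDictatorship n σ π (π j)) := by
  set R := ∑ i, v i (μ i)
  have hsum_nonneg : 0 ≤ ∑ π : Perm (Fin n), v (π j) (serialDictatorship n σ π (π j)) :=
    sum_nonneg fun π _ => h0 _ _
  rcases le_total (R - 2 * j) 0 with hR | hR
  · simpa [max_eq_right hR] using hsum_nonneg
  rw [max_eq_left hR]
  have hj : 2 * (j : ℕ) ≤ n := by
    exact_mod_cast (by linarith [sum_valuation_le h0 h1 μ] : (2 * j : ℝ) ≤ n)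
  have hfree (π : Perm (Fin n)) :
      v (π j) (μ (π j)) - (if μ (π j) ∈ takenItems n σ π j then 1 else 0)
        ≤ v (π j) (serialDictatorship n σ π (π j)) := by
    rw [serialDictatorship_apply_apply]
    split_ifs with hb
    · linarith [valuation_le_one h0 h1 (π j) (μ (π j)), h0 (π j)
        (bestItem n σ (π j) (univ \ takenItems n σ π j))]
    · rw [sub_zero]
      exact valuation_le_of_rank_le hcons
        (rank_bestItem_le σ _ (mem_sdiff.mpr ⟨mem_univ _, hb⟩))
  have hblocked : (#{π : Perm (Fin n) | μ (π j) ∈ takenItems n σ π j} : ℝ)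
      ≤ 2 * j * (n - 1)! := by
    exact_mod_cast card_mem_takenItems_le_of_two_mul_le σ μ j hj
  calc ((n - 1)! : ℝ) * (R - 2 * j)
      ≤ ∑ π : Perm (Fin n), v (π j) (μ (π j))
        - #{π : Perm (Fin n) | μ (π j) ∈ takenItems n σ π j} := by
        rw [sum_perm_apply j fun i => v i (μ i), Fintype.card_fin]
        linarith
    _ = ∑ π : Perm (Fin n),
          (v (π j) (μ (π j)) - if μ (π j) ∈ takenItems n σ π j then 1 else 0) := by
        rw [sum_sub_distrib, sum_boole]
    _ ≤ _ := sum_le_sum fun π _ => hfree π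

theorem factorial_mul_sq_le_sum_welfare (h0 : ∀ i g, 0 ≤ v i g)
    (h1 : ∀ i, ∑ g, v i g = 1) (hcons : ∀ i g g', σ i g < σ i g' → v i g' ≤ v i g)
    (μ : Perm (Fin n)) :
    ((n - 1)! : ℝ) * (∑ i, v i (μ i)) ^ 2
      ≤ 4 * ∑ π : Perm (Fin n), ∑ i, v i (serialDictatorship n σ π i) := by
  set R := ∑ i, v i (μ i)
  have hR : 0 ≤ R := sum_nonneg fun i _ => h0 i (μ i)
  have hRn : R ≤ 2 * n := by
    linarith [sum_valuation_le h0 h1 μ, (n.cast_nonneg : (0 : ℝ) ≤ n)]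
  calc ((n - 1)! : ℝ) * R ^ 2
      ≤ 4 * ∑ p ∈ range n, ((n - 1)! : ℝ) * max (R - 2 * p) 0 := by
        rw [← mul_sum]
        nlinarith [sq_le_four_mul_sum_max_sub hR hRn, (by positivity : (0 : ℝ) ≤ (n - 1)!)]
    _ = 4 * ∑ p : Fin n, ((n - 1)! : ℝ) * max (R - 2 * p) 0 := by
        rw [Fin.sum_univ_eq_sum_range (fun p => ((n - 1)! : ℝ) * max (R - 2 * p) 0)]
    _ ≤ 4 * ∑ p : Fin n, ∑ π : Perm (Fin n),
          v (π p) (serialDictatorship n σ π (π p)) := by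
        gcongr with p
        exact factorial_mul_max_le_sum_at_position h0 h1 hcons μ p
    _ = 4 * ∑ π : Perm (Fin n), ∑ i, v i (serialDictatorship n σ π i) := by
        rw [sum_comm]
        congr 1
        exact sum_congr rfl fun π _ =>
          Equiv.sum_comp π fun i => v i (serialDictatorship n σ π i)

end Welfare

/-- **Random Serial Dictatorship has distortion `O(√n)` for one-sided matching**
(Filos-Ratsikas, Frederiksen, Zhang). There is a constant `c > 0` such that for every
one-sided matching instance with `n ≥ 1` agents and `n` items, nonnegative unit-sum
valuations `v`, and consistent rankings `σ` (`σ i g` is the 0-indexed position of item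
`g` in agent `i`'s ranking), the expected social welfare of Random Serial Dictatorship
— the average, over the `n!` uniformly random orderings `π` of the agents, of the
social welfare of the serial dictatorship matching — is at least `1/(c⬝√n)` times the
social welfare of every perfect matching `μ`, where `SW(μ) = ∑ i, v i (μ i)`. -/
theorem rsd_distortion_upper_bound :
    ∃ c : ℝ, 0 < c ∧
      ∀ (n : ℕ), 1 ≤ n →
      ∀ (v : Fin n → Fin n → ℝ) (σ : Fin n → (Fin n ≃ Fin n)),
        (∀ i g, 0 ≤ v i g) →
        (∀ i, ∑ g, v i g = 1) →
        (∀ i g g', σ i g < σ i g' → v i g' ≤ v i g) →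
        ∀ μ : Equiv.Perm (Fin n),
          (1 / (c * Real.sqrt n)) * ∑ i, v i (μ i) ≤
            (∑ π : Equiv.Perm (Fin n), ∑ i, v i (serialDictatorship n σ π i)) /
              (Nat.factorial n : ℝ) := by
  refine ⟨2, two_pos, fun n hn v σ h0 h1 hcons μ => ?_⟩
  set R := ∑ i, v i (μ i)
  set W := ∑ π : Perm (Fin n), ∑ i, v i (serialDictatorship n σ π i)
  have hW₁ : (n ! : ℝ) ≤ W := factorial_le_sum_welfare hn h1 hcons
  have hW₂ : ((n - 1)! : ℝ) * R ^ 2 ≤ 4 * W := factorial_mul_sq_le_sum_welfare h0 h1 hcons μ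
  have hfac : (n ! : ℝ) = n * (n - 1)! := by exact_mod_cast (mul_factorial_pred (by omega)).symm
  have hn' : (0 : ℝ) < n := by exact_mod_cast hn
  have hfac_pos : (0 : ℝ) < (n - 1)! := by exact_mod_cast factorial_pos _
  set x := R / (2 * Real.sqrt n)
  have hx₁ : 1 ≤ W / n ! := by rw [le_div_iff₀ (by positivity)]; linarith
  have hx₂ : x ^ 2 ≤ W / n ! := by
    rw [div_pow, mul_pow, Real.sq_sqrt hn'.le, div_le_div_iff₀ (by positivity) (by positivity),
      hfac]
    nlinarith
  calc 1 / (2 * Real.sqrt n) * R = x := by ring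
    _ ≤ max 1 (x ^ 2) := by
        rcases le_total x 1 with h | h
        · exact le_max_of_le_left h
        · exact le_max_of_le_right (by nlinarith)
    _ ≤ W / n ! := max_le hx₁ hx₂
end

section
/- There exists a constant c > 0 such that for every n ≥ 2 and every deterministic ordinal one-sided matching rule f, which maps each profile of strict rankings of n agents over n items to a single perfect matching (bijection from agents to items), there exists an instance with unit-sum valuations and consistent rankings ≻ such that max_{μ} SW(μ) ≥ c·n² · SW(f(≻)), where the maximum is over all perfect matchings μ. In particular, every deterministic ordinal one-sided matching rule has distortion Ω(n²). -/
/-!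
All agents rank item `0` first, and agents `2k`, `2k + 1` both rank item `k + 1` second. Given the
rule's matching `π`, an agent's valuation depends only on the rank of the item `π` assigns it:
uniform if that is its top item, all mass on its top item if it is its second, and half on each of
its top two items otherwise. Then `π` earns only `1/n`, from the one agent holding item `0`. As `π`
gives each shared second item to at most one of its two agents, about `n/2` agents receive neither
of their top two items; handing them their (distinct) second items earns about `n/4`, and for small
`n` handing item `0` to another agent already earns `1/2`.
-/

open Finset

theorem Set.InjOn.exists_perm_sum_le_sum {α : Type*} [Fintype α] [DecidableEq α]
    (w : α → α → ℝ) (hw : ∀ i g, 0 ≤ w i g) {D : Finset α} {τ : α → α} (hτ : Set.InjOn τ D) :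
    ∃ μ : Equiv.Perm α, ∑ i ∈ D, w i (τ i) ≤ ∑ i, w i (μ i) := by
  obtain ⟨g, hg⟩ := exists_equiv_extend_of_card_eq card_univ.symm (Finset.subset_univ _) hτ
  refine ⟨g.trans (Equiv.subtypeUnivEquiv Finset.mem_univ), ?_⟩
  calc ∑ i ∈ D, w i (τ i) = ∑ i ∈ D, w i (g i) := sum_congr rfl fun i hi => by rw [hg i hi]
    _ ≤ ∑ i, w i (g i) := sum_le_sum_of_subset_of_nonneg (Finset.subset_univ _) fun i _ _ => hw i _

section AdversarialValue

variable {k : ℕ}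

/-- The value of the item of rank `q` to an agent whose assigned item has rank `r`. -/
noncomputable def adversarialValue (r q : Fin (k + 2)) : ℝ :=
  if r = 0 then ((k + 2 : ℕ) : ℝ)⁻¹
  else if r = 1 then (if q = 0 then 1 else 0)
  else (if q ≤ 1 then 1 / 2 else 0)

theorem adversarialValue_nonneg (r q : Fin (k + 2)) : 0 ≤ adversarialValue r q := by
  unfold adversarialValue; split_ifs <;> positivity

theorem sum_adversarialValue (r : Fin (k + 2)) : ∑ q, adversarialValue r q = 1 := by
  unfold adversarialValue
  split_ifs with h0 h1
  · simp [field]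
  · simp
  · have : (univ.filter fun q : Fin (k + 2) => q ≤ 1) = {0, 1} := by
      ext q; simp only [mem_filter, mem_univ, true_and, mem_insert, mem_singleton,
        Fin.le_iff_val_le_val, Fin.ext_iff, Fin.val_zero, Fin.val_one]; omega
    rw [← sum_filter, this, sum_pair (by simp)]; norm_num

theorem adversarialValue_antitone {r q q' : Fin (k + 2)} (h : q < q') :
    adversarialValue r q' ≤ adversarialValue r q := by
  rw [Fin.lt_def] at h
  unfold adversarialValue
  split_ifs <;> simp_all only [Fin.ext_iff, Fin.le_iff_val_le_val, Fin.val_zero, Fin.val_one] <;>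
    first | omega | norm_num

theorem adversarialValue_self (r : Fin (k + 2)) :
    adversarialValue r r = if r = 0 then ((k + 2 : ℕ) : ℝ)⁻¹ else 0 := by
  unfold adversarialValue
  split_ifs <;> simp_all only [Fin.ext_iff, Fin.le_iff_val_le_val, Fin.val_zero, Fin.val_one]
  omega

theorem half_le_adversarialValue_zero {r : Fin (k + 2)} (hr : r ≠ 0) :
    1 / 2 ≤ adversarialValue r 0 := by
  simp only [adversarialValue, if_neg hr, Fin.zero_le, if_true]
  split_ifs <;> norm_num

theorem adversarialValue_one {r : Fin (k + 2)} (hr₀ : r ≠ 0) (hr₁ : r ≠ 1) :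
    adversarialValue r 1 = 1 / 2 := by
  simp [adversarialValue, hr₀, hr₁]

end AdversarialValue

section AdversarialValuation

variable {ι α : Type*} {k : ℕ} (σ : ι → α ≃ Fin (k + 2)) (π : ι → α)

noncomputable def adversarialValuation (i : ι) (g : α) : ℝ :=
  adversarialValue (σ i (π i)) (σ i g)

theorem adversarialValuation_nonneg (i : ι) (g : α) : 0 ≤ adversarialValuation σ π i g :=
  adversarialValue_nonneg _ _

theorem sum_adversarialValuation [Fintype α] (i : ι) : ∑ g, adversarialValuation σ π i g = 1 := by
  rw [← sum_adversarialValue (σ i (π i))]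
  exact (σ i).sum_comp (adversarialValue (σ i (π i)))

theorem adversarialValuation_antitone {i : ι} {g g' : α} (h : σ i g < σ i g') :
    adversarialValuation σ π i g' ≤ adversarialValuation σ π i g :=
  adversarialValue_antitone h

theorem sum_adversarialValuation_self [Fintype ι] :
    ∑ i, adversarialValuation σ π i (π i) =
      #(univ.filter fun i => σ i (π i) = 0) * ((k + 2 : ℕ) : ℝ)⁻¹ := by
  simp only [adversarialValuation, adversarialValue_self, sum_ite, sum_const_zero, add_zero,
    sum_const, nsmul_eq_mul]

end AdversarialValuation

section PairedRankings

variable {m : ℕ}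

def secondItem (i : Fin (m + 2)) : Fin (m + 2) := ⟨(i : ℕ) / 2 + 1, by omega⟩

def pairedRanking (i : Fin (m + 2)) : Equiv.Perm (Fin (m + 2)) := Equiv.swap 1 (secondItem i)

theorem secondItem_ne_zero (i : Fin (m + 2)) : secondItem i ≠ 0 := by
  simp [secondItem, Fin.ext_iff]

theorem pairedRanking_apply_eq_zero_iff {i g : Fin (m + 2)} : pairedRanking i g = 0 ↔ g = 0 := by
  rw [← Equiv.eq_symm_apply, pairedRanking, Equiv.symm_swap,
    Equiv.swap_apply_of_ne_of_ne (by simp) (secondItem_ne_zero i).symm]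

theorem pairedRanking_apply_eq_one_iff {i g : Fin (m + 2)} :
    pairedRanking i g = 1 ↔ g = secondItem i := by
  rw [← Equiv.eq_symm_apply, pairedRanking, Equiv.symm_swap, Equiv.swap_apply_left]

/-- Agents `2k` and `2k + 1` both rank item `k + 1` second and `π` gives it to at most one of
them; this picks one that does not get it. -/
def unservedAgent (π : Equiv.Perm (Fin (m + 2))) (k : Fin (m / 2 + 1)) : Fin (m + 2) :=
  if π ⟨2 * k, by omega⟩ = secondItem ⟨2 * k, by omega⟩ then ⟨2 * k + 1, by omega⟩
  else ⟨2 * k, by omega⟩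

variable (π : Equiv.Perm (Fin (m + 2)))

theorem val_secondItem_unservedAgent (k : Fin (m / 2 + 1)) :
    (secondItem (unservedAgent π k) : ℕ) = k + 1 := by
  unfold unservedAgent secondItem
  split_ifs <;> simp only <;> omega

theorem unservedAgent_injective : Function.Injective (unservedAgent π) := fun k k' h => by
  have := val_secondItem_unservedAgent π k
  rw [h, val_secondItem_unservedAgent] at this
  exact Fin.ext (by omega)

theorem apply_unservedAgent_ne (k : Fin (m / 2 + 1)) :
    π (unservedAgent π k) ≠ secondItem (unservedAgent π k) := by
  unfold unservedAgent
  split_ifs with h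
  · have hs : secondItem (⟨2 * k + 1, by omega⟩ : Fin (m + 2)) = secondItem ⟨2 * k, by omega⟩ := by
      simp only [secondItem, Fin.mk.injEq]; omega
    rw [hs, ← h]
    exact π.injective.ne (by simp)
  · exact h

end PairedRankings

section PairedInstance

variable {m : ℕ} (π : Equiv.Perm (Fin (m + 2)))

theorem sum_adversarialValuation_pairedRanking_self :
    ∑ i, adversarialValuation pairedRanking π i (π i) = ((m + 2 : ℕ) : ℝ)⁻¹ := by
  have hserved : univ.filter (fun i => pairedRanking i (π i) = 0) = {π.symm 0} := by
    ext i; simp [pairedRanking_apply_eq_zero_iff, Equiv.eq_symm_apply]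
  rw [sum_adversarialValuation_self, hserved, card_singleton, Nat.cast_one, one_mul]

theorem exists_perm_half_le_sum_adversarialValuation :
    ∃ μ : Equiv.Perm (Fin (m + 2)), 1 / 2 ≤ ∑ i, adversarialValuation pairedRanking π i (μ i) := by
  obtain ⟨μ, hμ⟩ := Set.InjOn.exists_perm_sum_le_sum (D := {π.symm 1}) (τ := fun _ => 0) _
    (adversarialValuation_nonneg pairedRanking π) (by simp)
  refine ⟨μ, le_trans ?_ hμ⟩
  have hπ : pairedRanking (π.symm 1) (π (π.symm 1)) ≠ 0 := by
    simp [pairedRanking_apply_eq_zero_iff]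
  simpa [adversarialValuation, pairedRanking_apply_eq_zero_iff.mpr rfl] using
    half_le_adversarialValue_zero hπ

theorem exists_perm_quarter_le_sum_adversarialValuation :
    ∃ μ : Equiv.Perm (Fin (m + 2)),
      ((m / 2 : ℕ) : ℝ) / 2 ≤ ∑ i, adversarialValuation pairedRanking π i (μ i) := by
  set D := (univ.image (unservedAgent π)).erase (π.symm 0)
  have hinj : Set.InjOn secondItem (D : Set (Fin (m + 2))) := by
    simp only [D, coe_erase, coe_image, coe_univ, Set.image_univ]
    rintro _ ⟨⟨k, rfl⟩, -⟩ _ ⟨⟨k', rfl⟩, -⟩ h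
    have := congrArg Fin.val h
    rw [val_secondItem_unservedAgent, val_secondItem_unservedAgent] at this
    rw [Fin.ext (by omega : (k : ℕ) = k')]
  have hvalue : ∀ i ∈ D, adversarialValuation pairedRanking π i (secondItem i) = 1 / 2 := by
    intro i hi
    obtain ⟨hi₀, hi⟩ := mem_erase.mp hi
    obtain ⟨k, -, rfl⟩ := mem_image.mp hi
    rw [adversarialValuation, pairedRanking_apply_eq_one_iff.mpr rfl]
    apply adversarialValue_one
    · rwa [Ne, pairedRanking_apply_eq_zero_iff, ← Equiv.eq_symm_apply]
    · rw [Ne, pairedRanking_apply_eq_one_iff]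
      exact apply_unservedAgent_ne π k
  have hcard : m / 2 ≤ #D := by
    have := pred_card_le_card_erase (s := univ.image (unservedAgent π)) (a := π.symm 0)
    rwa [card_image_of_injective _ (unservedAgent_injective π), card_univ, Fintype.card_fin,
      Nat.add_sub_cancel] at this
  obtain ⟨μ, hμ⟩ := hinj.exists_perm_sum_le_sum _ (adversarialValuation_nonneg pairedRanking π)
  refine ⟨μ, le_trans ?_ hμ⟩
  rw [sum_congr rfl hvalue, sum_const, nsmul_eq_mul]
  have : ((m / 2 : ℕ) : ℝ) ≤ #D := by exact_mod_cast hcard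
  linarith

theorem exists_perm_size_div_sixteen_le_sum_adversarialValuation :
    ∃ μ : Equiv.Perm (Fin (m + 2)),
      ((m + 2 : ℕ) : ℝ) / 16 ≤ ∑ i, adversarialValuation pairedRanking π i (μ i) := by
  by_cases hm : m ≤ 6
  · obtain ⟨μ, hμ⟩ := exists_perm_half_le_sum_adversarialValuation π
    refine ⟨μ, le_trans ?_ hμ⟩
    have : (m : ℝ) ≤ 6 := by exact_mod_cast hm
    push_cast; linarith
  · obtain ⟨μ, hμ⟩ := exists_perm_quarter_le_sum_adversarialValuation π
    refine ⟨μ, le_trans ?_ hμ⟩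
    have : (m : ℝ) ≤ 2 * ((m / 2 : ℕ) : ℝ) + 1 := by
      exact_mod_cast (by omega : m ≤ 2 * (m / 2) + 1)
    have : (7 : ℝ) ≤ m := by exact_mod_cast (by omega : 7 ≤ m)
    push_cast; linarith

end PairedInstance

/-- **Lower bound of `Ω(n²)` for deterministic ordinal one-sided matching rules**
(Amanatidis, Birmpas, Filos-Ratsikas, Voudouris). There is a constant `c > 0` such
that for every `n ≥ 2` and every deterministic ordinal matching rule `f` — mapping each
profile of strict rankings of the `n` agents over the `n` items (`σ i g` is the
0-indexed position of item `g` in agent `i`'s ranking) to a single perfect matching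
(a bijection `Fin n ≃ Fin n` from agents to items) — there is an instance with
nonnegative unit-sum valuations `v` and consistent rankings `σ` in which some perfect
matching `μ` has social welfare at least `c⬝n²` times the social welfare of `f σ`,
where `SW(μ) = ∑ i, v i (μ i)`. -/
theorem deterministic_matching_distortion_lower_bound :
    ∃ c : ℝ, 0 < c ∧
      ∀ (n : ℕ), 2 ≤ n →
      ∀ f : (Fin n → (Fin n ≃ Fin n)) → Equiv.Perm (Fin n),
        ∃ (v : Fin n → Fin n → ℝ) (σ : Fin n → (Fin n ≃ Fin n)),
          (∀ i g, 0 ≤ v i g) ∧ (∀ i, ∑ g, v i g = 1) ∧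
          (∀ i g g', σ i g < σ i g' → v i g' ≤ v i g) ∧
          ∃ μ : Equiv.Perm (Fin n),
            c * (n : ℝ) ^ 2 * ∑ i, v i (f σ i) ≤ ∑ i, v i (μ i) := by
  refine ⟨1 / 16, by norm_num, fun n hn f => ?_⟩
  obtain ⟨m, rfl⟩ : ∃ m, n = m + 2 := ⟨n - 2, by omega⟩
  set π := f pairedRanking
  obtain ⟨μ, hμ⟩ := exists_perm_size_div_sixteen_le_sum_adversarialValuation π
  refine ⟨adversarialValuation pairedRanking π, pairedRanking,
    adversarialValuation_nonneg _ _, sum_adversarialValuation _ _,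
    fun i g g' => adversarialValuation_antitone _ _, μ, ?_⟩
  rw [sum_adversarialValuation_pairedRanking_self]
  calc 1 / 16 * ((m + 2 : ℕ) : ℝ) ^ 2 * ((m + 2 : ℕ) : ℝ)⁻¹ = ((m + 2 : ℕ) : ℝ) / 16 := by
        field_simp
    _ ≤ _ := hμ
end
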